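/- arXiv:2509.19617 — 10 statements merged into one kernel-verified Lean document; each statement's English description precedes it below -/
import Mathlib

section
/- Let L ≥ 2, let the jump rates c be symmetric (c(k,l) = c(l,k) for all k,l ∈ ℕ) with c(0,l) = 0 for all l, and let h : ℕ → ℝ. Define H(η) = (1/L) ∑_{x} h(η(x)) and Δh(k) = h(k−1) − 2h(k) + h(k+1) for k ≥ 1. Then for every configuration η : Fin L → ℕ, (ℒH)(η) = (L/(L−1)) ∑_{k≥1} ∑_{l≥1} Δh(k) c(k,l) F_k(η) F_l(η) − (1/(L−1)) ∑_{k≥1} Δh(k) c(k,k) F_k(η); all sums are finite since F_·(η) has finite support. -/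
/-- The configuration obtained from `η` by moving one particle from site `x` to site `y`
(truncated subtraction on `ℕ`). -/
def move {L : ℕ} (η : Fin L → ℕ) (x y : Fin L) : Fin L → ℕ :=
  fun z => if z = x then η x - 1 else if z = y then η y + 1 else η z

/-- The complete-graph misanthrope generator acting on `g`. -/
noncomputable def gen {L : ℕ} (c : ℕ → ℕ → ℝ) (g : (Fin L → ℕ) → ℝ)
    (η : Fin L → ℕ) : ℝ :=
  (1 / ((L : ℝ) - 1)) *
    ∑ x : Fin L, ∑ y : Fin L,
      if x ≠ y then c (η x) (η y) * (g (move η x y) - g η) else 0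

/-- The empirical measure `F_k(η) = (1/L)·card{x : η(x) = k}`. -/
noncomputable def emp {L : ℕ} (η : Fin L → ℕ) (k : ℕ) : ℝ :=
  ((Finset.univ.filter (fun x : Fin L => η x = k)).card : ℝ) / L

private lemma fiber_sum {L M : ℕ} (η : Fin L → ℕ) (hM : ∀ x, η x ≤ M) (f : ℕ → ℝ) :
    ∑ x : Fin L, f (η x)
      = ∑ k ∈ Finset.range (M + 1),
          ((Finset.univ.filter (fun x : Fin L => η x = k)).card : ℝ) * f k := by
  rw [← Finset.sum_fiberwise_of_maps_to (g := η) (t := Finset.range (M + 1))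
      (fun x _ => Finset.mem_range.mpr (Nat.lt_succ_of_le (hM x))) (fun x => f (η x))]
  refine Finset.sum_congr rfl fun k _ => ?_
  have hc : ∀ x ∈ Finset.univ.filter (fun x : Fin L => η x = k), f (η x) = f k :=
    fun x hx => by rw [(Finset.mem_filter.mp hx).2]
  rw [Finset.sum_congr rfl hc, Finset.sum_const, nsmul_eq_mul]

private lemma diag_split {L : ℕ} (f : Fin L → Fin L → ℝ) :
    (∑ x : Fin L, ∑ y : Fin L, if x ≠ y then f x y else 0)
      = (∑ x : Fin L, ∑ y : Fin L, f x y) - ∑ x : Fin L, f x x := by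
  rw [← Finset.sum_sub_distrib]
  refine Finset.sum_congr rfl fun x _ => ?_
  have hx : f x x = ∑ y : Fin L, if y = x then f x y else 0 := by
    rw [Finset.sum_ite_eq' Finset.univ x (f x)]; simp
  rw [hx, ← Finset.sum_sub_distrib]
  refine Finset.sum_congr rfl fun y _ => ?_
  by_cases hxy : x = y
  · subst hxy; simp
  · simp [hxy, Ne.symm hxy]

/-- the generator applied to an empirical average `H(η) = (1/L) ∑ₓ h(η(x))`,
expressed via the empirical measures.  The sums over `k ≥ 1` and `l ≥ 1` are written as
`tsum`s over `ℕ` with shifted index, and `Δh(k) = h(k-1) - 2h(k) + h(k+1)`. -/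
theorem stmt1 (L : ℕ) (hL : 2 ≤ L) (c : ℕ → ℕ → ℝ)
    (hcnn : ∀ k l, 0 ≤ c k l)
    (hsym : ∀ k l, c k l = c l k)
    (hc0 : ∀ l, c 0 l = 0)
    (h : ℕ → ℝ)
    (H : (Fin L → ℕ) → ℝ)
    (hH : H = fun η => (1 / (L : ℝ)) * ∑ x : Fin L, h (η x))
    (η : Fin L → ℕ) :
    gen c H η =
      ((L : ℝ) / ((L : ℝ) - 1)) *
        ∑' k : ℕ, ∑' l : ℕ,
          (h k - 2 * h (k + 1) + h (k + 2)) * c (k + 1) (l + 1) *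
            emp η (k + 1) * emp η (l + 1)
      - (1 / ((L : ℝ) - 1)) *
        ∑' k : ℕ,
          (h k - 2 * h (k + 1) + h (k + 2)) * c (k + 1) (k + 1) * emp η (k + 1) := by
  have hL0 : (L : ℝ) ≠ 0 := by
    have : (0 : ℝ) < L := by exact_mod_cast Nat.lt_of_lt_of_le Nat.zero_lt_two hL
    exact ne_of_gt this
  have hL2 : (2 : ℝ) ≤ (L : ℝ) := by exact_mod_cast hL
  have hL1 : (L : ℝ) - 1 ≠ 0 := by intro hcon; linarith
  set M := Finset.univ.sup η with hMdef
  have hM : ∀ x : Fin L, η x ≤ M := fun x => Finset.le_sup (Finset.mem_univ x)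
  have hempz : ∀ k, M < k → emp η k = 0 := by
    intro k hk
    have hfe : (Finset.univ.filter (fun x : Fin L => η x = k)) = ∅ := by
      refine Finset.filter_false_of_mem (fun x _ => ?_)
      have := hM x; omega
    simp [emp, hfe]
  have hcard : ∀ k, ((Finset.univ.filter (fun x : Fin L => η x = k)).card : ℝ)
      = (L : ℝ) * emp η k := by
    intro k; rw [emp]; field_simp
  set Δ : ℕ → ℝ := fun k => h k - 2 * h (k + 1) + h (k + 2) with hΔ
  set D : ℕ → ℝ := fun k => h (k - 1) - h k + (h (k + 1) - h k) with hD
  -- convert the tsums to finite sums over `range M`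
  have inner_tsum : ∀ k : ℕ,
      (∑' l : ℕ, Δ k * c (k + 1) (l + 1) * emp η (k + 1) * emp η (l + 1))
        = ∑ l ∈ Finset.range M, Δ k * c (k + 1) (l + 1) * emp η (k + 1) * emp η (l + 1) := by
    intro k
    refine tsum_eq_sum fun l hl => ?_
    have : M < l + 1 := by have := Finset.mem_range.not.mp hl; omega
    rw [hempz (l + 1) this, mul_zero]
  have outer_tsum :
      (∑' k : ℕ, ∑' l : ℕ, Δ k * c (k + 1) (l + 1) * emp η (k + 1) * emp η (l + 1))
        = ∑ k ∈ Finset.range M, ∑ l ∈ Finset.range M,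
            Δ k * c (k + 1) (l + 1) * emp η (k + 1) * emp η (l + 1) := by
    rw [tsum_eq_sum (s := Finset.range M) ?_]
    · exact Finset.sum_congr rfl fun k _ => inner_tsum k
    · intro k hk
      have : M < k + 1 := by have := Finset.mem_range.not.mp hk; omega
      have hz := hempz (k + 1) this
      simp [hz]
  have diag_tsum :
      (∑' k : ℕ, Δ k * c (k + 1) (k + 1) * emp η (k + 1))
        = ∑ k ∈ Finset.range M, Δ k * c (k + 1) (k + 1) * emp η (k + 1) := by
    refine tsum_eq_sum fun k hk => ?_
    have : M < k + 1 := by have := Finset.mem_range.not.mp hk; omega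
    rw [hempz (k + 1) this, mul_zero]
  rw [outer_tsum, diag_tsum]
  -- the per-pair increment of H
  have key : ∀ x y : Fin L, x ≠ y →
      H (move η x y) - H η
        = (1 / (L : ℝ)) * ((h (η x - 1) - h (η x)) + (h (η y + 1) - h (η y))) := by
    intro x y hxy
    subst hH
    simp only
    rw [← mul_sub, ← Finset.sum_sub_distrib]
    congr 1
    have hsub : ({x, y} : Finset (Fin L)) ⊆ Finset.univ := Finset.subset_univ _
    have hvan : ∀ z ∈ Finset.univ, z ∉ ({x, y} : Finset (Fin L)) →
        h (move η x y z) - h (η z) = 0 := by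
      intro z _ hz
      simp only [Finset.mem_insert, Finset.mem_singleton, not_or] at hz
      simp [move, hz.1, hz.2]
    rw [← Finset.sum_subset hsub hvan, Finset.sum_pair hxy]
    have h1 : move η x y x = η x - 1 := by simp [move]
    have h2 : move η x y y = η y + 1 := by simp [move, Ne.symm hxy]
    rw [h1, h2]
  -- rewrite the generator sum using `key`
  have gen_eq : gen c H η
      = (1 / ((L : ℝ) - 1)) * ((1 / (L : ℝ)) *
          ∑ x : Fin L, ∑ y : Fin L,
            if x ≠ y then c (η x) (η y) *
              ((h (η x - 1) - h (η x)) + (h (η y + 1) - h (η y))) else 0) := by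
    rw [gen]
    congr 1
    rw [Finset.mul_sum]
    refine Finset.sum_congr rfl fun x _ => ?_
    rw [Finset.mul_sum]
    refine Finset.sum_congr rfl fun y _ => ?_
    by_cases hxy : x = y
    · simp [hxy]
    · rw [if_pos hxy, if_pos hxy, key x y hxy]; ring
  -- symmetrize
  have split :
      (∑ x : Fin L, ∑ y : Fin L,
          if x ≠ y then c (η x) (η y) *
            ((h (η x - 1) - h (η x)) + (h (η y + 1) - h (η y))) else 0)
      = (∑ x : Fin L, ∑ y : Fin L,
          if x ≠ y then c (η x) (η y) * (h (η x - 1) - h (η x)) else 0)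
        + ∑ x : Fin L, ∑ y : Fin L,
            if x ≠ y then c (η x) (η y) * (h (η y + 1) - h (η y)) else 0 := by
    rw [← Finset.sum_add_distrib]
    refine Finset.sum_congr rfl fun x _ => ?_
    rw [← Finset.sum_add_distrib]
    refine Finset.sum_congr rfl fun y _ => ?_
    by_cases hxy : x = y
    · simp [hxy]
    · rw [if_pos hxy, if_pos hxy, if_pos hxy]; ring
  have swap :
      (∑ x : Fin L, ∑ y : Fin L,
          if x ≠ y then c (η x) (η y) * (h (η y + 1) - h (η y)) else 0)
      = ∑ x : Fin L, ∑ y : Fin L,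
          if x ≠ y then c (η x) (η y) * (h (η x + 1) - h (η x)) else 0 := by
    rw [Finset.sum_comm]
    refine Finset.sum_congr rfl fun a _ => Finset.sum_congr rfl fun b _ => ?_
    by_cases hab : a = b
    · simp [hab]
    · rw [if_pos (Ne.symm hab), if_pos hab, hsym (η b) (η a)]
  have comb :
      ((∑ x : Fin L, ∑ y : Fin L,
          if x ≠ y then c (η x) (η y) * (h (η x - 1) - h (η x)) else 0)
        + ∑ x : Fin L, ∑ y : Fin L,
            if x ≠ y then c (η x) (η y) * (h (η x + 1) - h (η x)) else 0)
      = ∑ x : Fin L, ∑ y : Fin L,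
          if x ≠ y then c (η x) (η y) * D (η x) else 0 := by
    rw [← Finset.sum_add_distrib]
    refine Finset.sum_congr rfl fun x _ => ?_
    rw [← Finset.sum_add_distrib]
    refine Finset.sum_congr rfl fun y _ => ?_
    by_cases hxy : x = y
    · simp [hxy]
    · rw [if_pos hxy, if_pos hxy, if_pos hxy]
      simp only [hD]; ring
  rw [gen_eq, split, swap, comb, diag_split (fun x y => c (η x) (η y) * D (η x))]
  -- fiberwise sums
  have fib1 : (∑ x : Fin L, ∑ y : Fin L, c (η x) (η y) * D (η x))
      = ∑ k ∈ Finset.range (M + 1),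
          ((Finset.univ.filter (fun x : Fin L => η x = k)).card : ℝ) *
            ∑ l ∈ Finset.range (M + 1),
              ((Finset.univ.filter (fun x : Fin L => η x = l)).card : ℝ) * (c k l * D k) := by
    have e1 := fiber_sum η hM (fun k => ∑ y : Fin L, c k (η y) * D k)
    rw [e1]
    refine Finset.sum_congr rfl fun k _ => ?_
    have e2 := fiber_sum η hM (fun l => c k l * D k)
    rw [e2]
  have fib2 : (∑ x : Fin L, c (η x) (η x) * D (η x))
      = ∑ k ∈ Finset.range (M + 1),
          ((Finset.univ.filter (fun x : Fin L => η x = k)).card : ℝ) * (c k k * D k) := by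
    have e1 := fiber_sum η hM (fun k => c k k * D k)
    rw [e1]
  rw [fib1, fib2]
  -- strip the zero (k = 0 or l = 0) terms
  have strip1 :
      (∑ k ∈ Finset.range (M + 1),
          ((Finset.univ.filter (fun x : Fin L => η x = k)).card : ℝ) *
            ∑ l ∈ Finset.range (M + 1),
              ((Finset.univ.filter (fun x : Fin L => η x = l)).card : ℝ) * (c k l * D k))
      = ∑ k ∈ Finset.range M,
          ((Finset.univ.filter (fun x : Fin L => η x = k + 1)).card : ℝ) *
            ∑ l ∈ Finset.range M,
              ((Finset.univ.filter (fun x : Fin L => η x = l + 1)).card : ℝ) *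
                (c (k + 1) (l + 1) * D (k + 1)) := by
    rw [Finset.sum_range_succ']
    have hz0 : ((Finset.univ.filter (fun x : Fin L => η x = 0)).card : ℝ) *
        ∑ l ∈ Finset.range (M + 1),
          ((Finset.univ.filter (fun x : Fin L => η x = l)).card : ℝ) * (c 0 l * D 0) = 0 := by
      simp [hc0]
    rw [hz0, add_zero]
    refine Finset.sum_congr rfl fun k _ => ?_
    congr 1
    rw [Finset.sum_range_succ']
    have hz : ((Finset.univ.filter (fun x : Fin L => η x = 0)).card : ℝ) *
        (c (k + 1) 0 * D (k + 1)) = 0 := by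
      rw [hsym (k + 1) 0, hc0]; ring
    rw [hz, add_zero]
  have strip2 :
      (∑ k ∈ Finset.range (M + 1),
          ((Finset.univ.filter (fun x : Fin L => η x = k)).card : ℝ) * (c k k * D k))
      = ∑ k ∈ Finset.range M,
          ((Finset.univ.filter (fun x : Fin L => η x = k + 1)).card : ℝ) *
            (c (k + 1) (k + 1) * D (k + 1)) := by
    rw [Finset.sum_range_succ']
    simp [hc0]
  rw [strip1, strip2]
  -- express via `emp` and finish by algebra
  have hS1 :
      (∑ k ∈ Finset.range M,
          ((Finset.univ.filter (fun x : Fin L => η x = k + 1)).card : ℝ) *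
            ∑ l ∈ Finset.range M,
              ((Finset.univ.filter (fun x : Fin L => η x = l + 1)).card : ℝ) *
                (c (k + 1) (l + 1) * D (k + 1)))
      = (L : ℝ) * (L : ℝ) *
          ∑ k ∈ Finset.range M, ∑ l ∈ Finset.range M,
            Δ k * c (k + 1) (l + 1) * emp η (k + 1) * emp η (l + 1) := by
    rw [Finset.mul_sum]
    refine Finset.sum_congr rfl fun k _ => ?_
    rw [hcard, Finset.mul_sum, Finset.mul_sum]
    refine Finset.sum_congr rfl fun l _ => ?_
    rw [hcard]
    simp only [hD, hΔ, Nat.add_sub_cancel]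
    ring
  have hS2 :
      (∑ k ∈ Finset.range M,
          ((Finset.univ.filter (fun x : Fin L => η x = k + 1)).card : ℝ) *
            (c (k + 1) (k + 1) * D (k + 1)))
      = (L : ℝ) *
          ∑ k ∈ Finset.range M, Δ k * c (k + 1) (k + 1) * emp η (k + 1) := by
    rw [Finset.mul_sum]
    refine Finset.sum_congr rfl fun k _ => ?_
    rw [hcard]
    simp only [hD, hΔ, Nat.add_sub_cancel]
    ring
  rw [hS1, hS2]
  field_simp
end

section
/- Let L ≥ 2, let the jump rates c be symmetric (c(k,l) = c(l,k) for all k,l ∈ ℕ) with c(0,l) = 0 for all l, and satisfy the growth bound c(k,l) ≤ C(k^μ l^ν + k^ν l^μ) for all k,l with constants C > 0 and 0 ≤ μ, ν ≤ 2, μ + ν ≤ 3. Let h : ℕ → ℝ with |h(k)| ≤ M for all k, and set H(η) = (1/L) ∑_{x} h(η(x)). Then for every configuration η : Fin L → ℕ, |(ℒH)(η)| ≤ 16 C M (∑_{k≥1} k^μ F_k(η)) (∑_{l≥1} l^ν F_l(η)). -/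
lemma tsum_emp_eq {L : ℕ} (η : Fin L → ℕ) (μ : ℝ) :
    ∑' k : ℕ, ((k + 1 : ℕ) : ℝ) ^ μ * emp η (k + 1)
      = (∑ x : Fin L, if η x = 0 then 0 else ((η x : ℝ)) ^ μ) / L := by
  have hrw : ∀ k : ℕ, ((k + 1 : ℕ) : ℝ) ^ μ * emp η (k + 1)
      = ∑ x : Fin L, (if η x = k + 1 then ((k + 1 : ℕ) : ℝ) ^ μ / L else 0) := by
    intro k
    rw [← Finset.sum_filter, Finset.sum_const, emp]
    push_cast
    ring
  rw [tsum_congr hrw]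
  rw [Summable.tsum_finsetSum (fun x _ => ?_)]
  · rw [Finset.sum_div]
    refine Finset.sum_congr rfl fun x _ => ?_
    rcases Nat.eq_zero_or_pos (η x) with h0 | hpos
    · simp [h0]
    · obtain ⟨n, hn⟩ := Nat.exists_eq_add_of_lt hpos
      rw [tsum_eq_single n]
      · have hne : η x ≠ 0 := by omega
        have : η x = n + 1 := by omega
        simp [this]
      · intro k hk
        have : η x ≠ k + 1 := by omega
        simp [this]
  · apply summable_of_ne_finset_zero (s := {η x - 1})
    intro k hk
    have : η x ≠ k + 1 := by simp at hk; omega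
    simp [this]

lemma move_eq_update {L : ℕ} (η : Fin L → ℕ) (x y : Fin L) (hxy : x ≠ y) :
    move η x y = Function.update (Function.update η x (η x - 1)) y (η y + 1) := by
  funext z
  rcases eq_or_ne z x with rfl | hzx
  · simp [move, Function.update_of_ne hxy, Function.update_self]
  · rcases eq_or_ne z y with rfl | hzy
    · simp [move, Function.update_self, Ne.symm hxy]
    · simp [move, hzx, hzy, Function.update_of_ne hzy, Function.update_of_ne hzx]

lemma Hdiff {L : ℕ} (η : Fin L → ℕ) (x y : Fin L) (hxy : x ≠ y) (h : ℕ → ℝ) :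
    (∑ z : Fin L, h (move η x y z)) - ∑ z : Fin L, h (η z)
      = (h (η x - 1) - h (η x)) + (h (η y + 1) - h (η y)) := by
  rw [move_eq_update η x y hxy]
  have h1 : ∀ (f : Fin L → ℕ) (i : Fin L) (v : ℕ),
      (fun z => h (Function.update f i v z)) = Function.update (fun z => h (f z)) i (h v) := by
    intro f i v
    funext z
    rcases eq_or_ne z i with rfl | hz
    · simp
    · simp [Function.update_of_ne hz]
  have key : (∑ z : Fin L, h (Function.update (Function.update η x (η x - 1)) y (η y + 1) z))
      = (h (η x - 1) - h (η x)) + (h (η y + 1) - h (η y)) + ∑ z : Fin L, h (η z) := by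
    calc (∑ z : Fin L, h (Function.update (Function.update η x (η x - 1)) y (η y + 1) z))
        = ∑ z : Fin L, Function.update
            (fun z => h (Function.update η x (η x - 1) z)) y (h (η y + 1)) z := by
          rw [← h1]
      _ = h (η y + 1) + ∑ z ∈ Finset.univ \ {y},
            h (Function.update η x (η x - 1) z) := by
          rw [Finset.sum_update_of_mem (Finset.mem_univ y)]
      _ = h (η y + 1) + ∑ z ∈ Finset.univ \ {y},
            Function.update (fun z => h (η z)) x (h (η x - 1)) z := by rw [← h1]
      _ = h (η y + 1) + (h (η x - 1) + ∑ z ∈ (Finset.univ \ {y}) \ {x}, h (η z)) := by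
          rw [Finset.sum_update_of_mem (by simp [hxy])]
      _ = (h (η x - 1) - h (η x)) + (h (η y + 1) - h (η y)) + ∑ z : Fin L, h (η z) := by
          have e1 : ∑ z : Fin L, h (η z)
              = h (η y) + ∑ z ∈ Finset.univ \ {y}, h (η z) := by
            rw [Finset.sum_eq_sum_sdiff_singleton_add (Finset.mem_univ y) (fun z => h (η z))]
            ring
          have e2 : ∑ z ∈ Finset.univ \ {y}, h (η z)
              = h (η x) + ∑ z ∈ (Finset.univ \ {y}) \ {x}, h (η z) := by
            rw [Finset.sum_eq_sum_sdiff_singleton_add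
              (by simp [hxy] : x ∈ Finset.univ \ {y}) (fun z => h (η z))]
            ring
          rw [e1, e2]; ring
  linarith

/-- bound on the generator applied to a bounded empirical average.
The sums over `k ≥ 1` and `l ≥ 1` are written as shifted `tsum`s, and `k^μ` is a
real power (`rpow`). -/
theorem stmt2 (L : ℕ) (hL : 2 ≤ L) (c : ℕ → ℕ → ℝ)
    (hcnn : ∀ k l, 0 ≤ c k l)
    (hsym : ∀ k l, c k l = c l k)
    (hc0 : ∀ l, c 0 l = 0)
    (C μ ν : ℝ) (hC : 0 < C)
    (hμ0 : 0 ≤ μ) (hμ2 : μ ≤ 2) (hν0 : 0 ≤ ν) (hν2 : ν ≤ 2) (hμν : μ + ν ≤ 3)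
    (hgrow : ∀ k l : ℕ, c k l ≤ C * ((k : ℝ) ^ μ * (l : ℝ) ^ ν + (k : ℝ) ^ ν * (l : ℝ) ^ μ))
    (h : ℕ → ℝ) (M : ℝ) (hM : ∀ k, |h k| ≤ M)
    (H : (Fin L → ℕ) → ℝ)
    (hH : H = fun η => (1 / (L : ℝ)) * ∑ x : Fin L, h (η x))
    (η : Fin L → ℕ) :
    |gen c H η| ≤
      16 * C * M * (∑' k : ℕ, ((k + 1 : ℕ) : ℝ) ^ μ * emp η (k + 1)) *
        (∑' l : ℕ, ((l + 1 : ℕ) : ℝ) ^ ν * emp η (l + 1)) := by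
  have hM0 : 0 ≤ M := le_trans (abs_nonneg _) (hM 0)
  have hL2 : (2 : ℝ) ≤ L := by exact_mod_cast hL
  have hLpos : (0 : ℝ) < L := by linarith
  have hL1 : (0 : ℝ) < (L : ℝ) - 1 := by linarith
  set a : Fin L → ℝ := fun x => if η x = 0 then 0 else ((η x : ℝ)) ^ μ with ha
  set b : Fin L → ℝ := fun x => if η x = 0 then 0 else ((η x : ℝ)) ^ ν with hb
  have han : ∀ x, 0 ≤ a x := by
    intro x; rw [ha]; dsimp only
    split
    · exact le_refl 0
    · exact Real.rpow_nonneg (Nat.cast_nonneg _) _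
  have hbn : ∀ x, 0 ≤ b x := by
    intro x; rw [hb]; dsimp only
    split
    · exact le_refl 0
    · exact Real.rpow_nonneg (Nat.cast_nonneg _) _
  have key : ∀ x y : Fin L,
      |if x ≠ y then c (η x) (η y) * (H (move η x y) - H η) else 0|
        ≤ C * (a x * b y + b x * a y) * (4 * M / L) := by
    intro x y
    have hrhs : 0 ≤ C * (a x * b y + b x * a y) * (4 * M / L) := by
      apply mul_nonneg
      · exact mul_nonneg hC.le
          (add_nonneg (mul_nonneg (han x) (hbn y)) (mul_nonneg (hbn x) (han y)))
      · positivity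
    by_cases hxy : x = y
    · simpa [hxy] using hrhs
    · rw [if_pos hxy, abs_mul, abs_of_nonneg (hcnn _ _)]
      have hHb : |H (move η x y) - H η| ≤ 4 * M / L := by
        have hd := Hdiff η x y hxy h
        have hexpr : H (move η x y) - H η
            = (1 / (L : ℝ)) * ((h (η x - 1) - h (η x)) + (h (η y + 1) - h (η y))) := by
          rw [hH]; dsimp only; rw [← hd]; ring
        rw [hexpr, abs_mul, abs_of_nonneg (by positivity : (0:ℝ) ≤ 1 / (L:ℝ))]
        have h4 : |(h (η x - 1) - h (η x)) + (h (η y + 1) - h (η y))| ≤ 4 * M := by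
          have h1 := abs_le.mp (hM (η x - 1))
          have h2 := abs_le.mp (hM (η x))
          have h3 := abs_le.mp (hM (η y + 1))
          have h5 := abs_le.mp (hM (η y))
          rw [abs_le]; constructor <;> [linarith [h1.1, h2.2, h3.1, h5.2];
            linarith [h1.2, h2.1, h3.2, h5.1]]
        calc (1 / (L:ℝ)) * |(h (η x - 1) - h (η x)) + (h (η y + 1) - h (η y))|
            ≤ (1 / (L:ℝ)) * (4 * M) := by
              exact mul_le_mul_of_nonneg_left h4 (by positivity)
          _ = 4 * M / L := by ring
      have hcb : c (η x) (η y) ≤ C * (a x * b y + b x * a y) := by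
        rcases Nat.eq_zero_or_pos (η x) with h0 | hx
        · rw [h0, hc0]
          exact mul_nonneg hC.le
            (add_nonneg (mul_nonneg (han x) (hbn y)) (mul_nonneg (hbn x) (han y)))
        rcases Nat.eq_zero_or_pos (η y) with h0 | hy
        · rw [h0, hsym, hc0]
          exact mul_nonneg hC.le
            (add_nonneg (mul_nonneg (han x) (hbn y)) (mul_nonneg (hbn x) (han y)))
        have hax : a x = ((η x : ℝ)) ^ μ := by rw [ha]; simp [hx.ne']
        have hbx : b x = ((η x : ℝ)) ^ ν := by rw [hb]; simp [hx.ne']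
        have hay : a y = ((η y : ℝ)) ^ μ := by rw [ha]; simp [hy.ne']
        have hby : b y = ((η y : ℝ)) ^ ν := by rw [hb]; simp [hy.ne']
        rw [hax, hbx, hay, hby]
        exact hgrow (η x) (η y)
      calc c (η x) (η y) * |H (move η x y) - H η|
          ≤ (C * (a x * b y + b x * a y)) * (4 * M / L) := by
            apply mul_le_mul hcb hHb (abs_nonneg _)
            exact mul_nonneg hC.le
              (add_nonneg (mul_nonneg (han x) (hbn y)) (mul_nonneg (hbn x) (han y)))
        _ = C * (a x * b y + b x * a y) * (4 * M / L) := by ring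
  set A := ∑ x : Fin L, a x with hA
  set B := ∑ x : Fin L, b x with hB
  have hAnn : 0 ≤ A := Finset.sum_nonneg fun x _ => han x
  have hBnn : 0 ≤ B := Finset.sum_nonneg fun x _ => hbn x
  have habs : |gen c H η| ≤ (1 / ((L:ℝ) - 1)) * (C * (4 * M / L) * (2 * A * B)) := by
    rw [gen, abs_mul, abs_of_nonneg (by positivity : (0:ℝ) ≤ 1 / ((L:ℝ) - 1))]
    apply mul_le_mul_of_nonneg_left _ (by positivity)
    calc |∑ x : Fin L, ∑ y : Fin L,
            if x ≠ y then c (η x) (η y) * (H (move η x y) - H η) else 0|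
        ≤ ∑ x : Fin L, ∑ y : Fin L,
            |if x ≠ y then c (η x) (η y) * (H (move η x y) - H η) else 0| := by
          refine (Finset.abs_sum_le_sum_abs _ _).trans ?_
          exact Finset.sum_le_sum fun x _ => Finset.abs_sum_le_sum_abs _ _
      _ ≤ ∑ x : Fin L, ∑ y : Fin L, C * (a x * b y + b x * a y) * (4 * M / L) := by
          exact Finset.sum_le_sum fun x _ => Finset.sum_le_sum fun y _ => key x y
      _ = C * (4 * M / L) * (2 * A * B) := by
          have inner : ∀ x : Fin L, ∑ y : Fin L, C * (a x * b y + b x * a y) * (4 * M / L)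
              = C * (a x * B + b x * A) * (4 * M / L) := by
            intro x
            rw [← Finset.sum_mul, ← Finset.mul_sum, Finset.sum_add_distrib,
              ← Finset.mul_sum, ← Finset.mul_sum]
          rw [Finset.sum_congr rfl fun x _ => inner x]
          rw [← Finset.sum_mul, ← Finset.mul_sum, Finset.sum_add_distrib,
            ← Finset.sum_mul, ← Finset.sum_mul]
          ring
  rw [tsum_emp_eq η μ, tsum_emp_eq η ν]
  have hgA : (∑ x : Fin L, if η x = 0 then 0 else ((η x : ℝ)) ^ μ) = A := by
    rw [hA, ha]
  have hgB : (∑ x : Fin L, if η x = 0 then 0 else ((η x : ℝ)) ^ ν) = B := by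
    rw [hB, hb]
  rw [hgA, hgB]
  refine habs.trans ?_
  have h1 : (1 / ((L:ℝ) - 1)) * (C * (4 * M / L) * (2 * A * B))
      = 8 * (C * M * (A * B)) / (((L:ℝ) - 1) * L) := by
    field_simp; ring
  have h2 : 16 * C * M * (A / L) * (B / L) = 16 * (C * M * (A * B)) / ((L:ℝ) * L) := by
    field_simp
  rw [h1, h2, div_le_div_iff₀ (by positivity) (by positivity)]
  have ht : 0 ≤ C * M * (A * B) := mul_nonneg (mul_nonneg hC.le hM0) (mul_nonneg hAnn hBnn)
  nlinarith [mul_nonneg (mul_nonneg ht hLpos.le) (by linarith : (0:ℝ) ≤ (L:ℝ) - 2)]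
end

section
/- Let f : ℕ → ℝ with f_k ≥ 0 for all k, let ρ > 0 with ∑_{k≥1} k f_k ≤ ρ and ∑_{k≥1} k³ f_k < ∞, and let 0 ≤ μ, ν ≤ 2 with μ + ν ≤ 3. Then ( (∑_{k≥1} k^μ f_k) (∑_{k≥1} k^ν f_k) )² ≤ ρ³ ∑_{k≥1} k³ f_k. -/
open Real

private lemma aux_one_le (k : ℕ) : (1:ℝ) ≤ ((k + 1 : ℕ) : ℝ) := by
  exact_mod_cast Nat.succ_le_succ (Nat.zero_le k)

private lemma aux_rpow3 (k : ℕ) : ((k + 1 : ℕ) : ℝ) ^ (3:ℝ) = ((k + 1 : ℕ) : ℝ) ^ (3:ℕ) := by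
  rw [← Real.rpow_natCast]; norm_num

private lemma aux_summable (f : ℕ → ℝ) (hf : ∀ k, 0 ≤ f k)
    (hsum3 : Summable fun k : ℕ => ((k + 1 : ℕ) : ℝ) ^ 3 * f (k + 1))
    {t : ℝ} (ht : t ≤ 3) :
    Summable fun k : ℕ => ((k + 1 : ℕ) : ℝ) ^ t * f (k + 1) := by
  apply hsum3.of_nonneg_of_le
  · intro k
    exact mul_nonneg (Real.rpow_nonneg (by positivity) t) (hf (k + 1))
  · intro k
    have h := Real.rpow_le_rpow_of_exponent_le (aux_one_le k) ht
    rw [aux_rpow3] at h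
    exact mul_le_mul_of_nonneg_right h (hf (k + 1))

private lemma aux_mono (f : ℕ → ℝ) (hf : ∀ k, 0 ≤ f k)
    (hsum3 : Summable fun k : ℕ => ((k + 1 : ℕ) : ℝ) ^ 3 * f (k + 1))
    {t s : ℝ} (hts : t ≤ s) (hs : s ≤ 3) :
    (∑' k : ℕ, ((k + 1 : ℕ) : ℝ) ^ t * f (k + 1)) ≤
      ∑' k : ℕ, ((k + 1 : ℕ) : ℝ) ^ s * f (k + 1) := by
  refine Summable.tsum_le_tsum (fun k => ?_) (aux_summable f hf hsum3 (hts.trans hs))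
    (aux_summable f hf hsum3 hs)
  exact mul_le_mul_of_nonneg_right (Real.rpow_le_rpow_of_exponent_le (aux_one_le k) hts)
    (hf (k + 1))

private lemma aux_holder (f : ℕ → ℝ) (hf : ∀ k, 0 ≤ f k)
    (hsum1 : Summable fun k : ℕ => ((k + 1 : ℕ) : ℝ) * f (k + 1))
    (hsum3 : Summable fun k : ℕ => ((k + 1 : ℕ) : ℝ) ^ 3 * f (k + 1))
    {t : ℝ} (ht1 : 1 ≤ t) (ht2 : t ≤ 2) :
    (∑' k : ℕ, ((k + 1 : ℕ) : ℝ) ^ t * f (k + 1)) ≤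
      (∑' k : ℕ, ((k + 1 : ℕ) : ℝ) * f (k + 1)) ^ ((3 - t) / 2) *
      (∑' k : ℕ, ((k + 1 : ℕ) : ℝ) ^ 3 * f (k + 1)) ^ ((t - 1) / 2) := by
  rcases eq_or_lt_of_le ht1 with h1 | h1
  · subst h1
    norm_num
  · set θ : ℝ := (3 - t) / 2 with hθdef
    have hθ0 : 0 < θ := by simp only [hθdef]; linarith
    have hθ1 : θ < 1 := by simp only [hθdef]; linarith
    have hne : (1:ℝ) - θ ≠ 0 := by linarith
    have hpq : Real.HolderConjugate (1/θ) (1/(1-θ)) := by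
      rw [Real.holderConjugate_iff]
      constructor
      · rw [lt_div_iff₀ hθ0]; linarith
      · simp only [one_div, inv_inv]; ring
    set F : ℕ → ℝ := fun k => ((k + 1 : ℕ) : ℝ) ^ θ * f (k + 1) ^ θ with hF
    set G : ℕ → ℝ := fun k => ((k + 1 : ℕ) : ℝ) ^ (3 * (1 - θ)) * f (k + 1) ^ (1 - θ) with hG
    have hw0 : ∀ k : ℕ, (0:ℝ) < ((k + 1 : ℕ) : ℝ) := fun k => lt_of_lt_of_le one_pos (aux_one_le k)
    have hFG : ∀ k, F k * G k = ((k + 1 : ℕ) : ℝ) ^ t * f (k + 1) := by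
      intro k
      simp only [hF, hG]
      rw [mul_mul_mul_comm, ← Real.rpow_add (hw0 k), ← Real.rpow_add' (hf (k+1)) (by norm_num),
        show θ + 3 * (1 - θ) = t by rw [hθdef]; ring,
        show θ + (1 - θ) = 1 by ring, Real.rpow_one]
    have hFp : ∀ k, F k ^ (1/θ) = ((k + 1 : ℕ) : ℝ) * f (k + 1) := by
      intro k
      simp only [hF]
      rw [Real.mul_rpow (Real.rpow_nonneg (hw0 k).le _) (Real.rpow_nonneg (hf (k+1)) _),
        ← Real.rpow_mul (hw0 k).le, ← Real.rpow_mul (hf (k+1)),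
        mul_one_div_cancel hθ0.ne', Real.rpow_one, Real.rpow_one]
    have hGq : ∀ k, G k ^ (1/(1-θ)) = ((k + 1 : ℕ) : ℝ) ^ 3 * f (k + 1) := by
      intro k
      simp only [hG]
      rw [Real.mul_rpow (Real.rpow_nonneg (hw0 k).le _) (Real.rpow_nonneg (hf (k+1)) _),
        ← Real.rpow_mul (hw0 k).le, ← Real.rpow_mul (hf (k+1)),
        mul_one_div_cancel hne, mul_assoc, mul_one_div_cancel hne, mul_one,
        Real.rpow_one, aux_rpow3]
    have hFnn : ∀ k, 0 ≤ F k := fun k =>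
      mul_nonneg (Real.rpow_nonneg (hw0 k).le _) (Real.rpow_nonneg (hf (k+1)) _)
    have hGnn : ∀ k, 0 ≤ G k := fun k =>
      mul_nonneg (Real.rpow_nonneg (hw0 k).le _) (Real.rpow_nonneg (hf (k+1)) _)
    have hFsum : Summable fun k => F k ^ (1/θ) := by
      simpa only [hFp] using hsum1
    have hGsum : Summable fun k => G k ^ (1/(1-θ)) := by
      simpa only [hGq] using hsum3
    have key := inner_le_Lp_mul_Lq_tsum_of_nonneg hpq hFnn hGnn hFsum hGsum
    simp only [hFp, hGq, one_div_one_div] at key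
    rw [show (t - 1) / 2 = 1 - θ by rw [hθdef]; ring]
    calc (∑' k : ℕ, ((k + 1 : ℕ) : ℝ) ^ t * f (k + 1))
        = ∑' k, F k * G k := (tsum_congr hFG).symm
      _ ≤ _ := key

/-- key estimate (3.13): for `0 ≤ μ, ν ≤ 2` with `μ + ν ≤ 3`,
`((∑_{k≥1} k^μ f_k)(∑_{k≥1} k^ν f_k))² ≤ ρ³ ∑_{k≥1} k³ f_k` whenever `∑_{k≥1} k f_k ≤ ρ`.
Sums over `k ≥ 1` are written as shifted `tsum`s over `ℕ`; `k^μ` is a real power. -/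
theorem stmt6 (f : ℕ → ℝ) (hf : ∀ k, 0 ≤ f k)
    (ρ : ℝ) (hρ : 0 < ρ)
    (μ ν : ℝ) (hμ0 : 0 ≤ μ) (hμ2 : μ ≤ 2) (hν0 : 0 ≤ ν) (hν2 : ν ≤ 2) (hμν : μ + ν ≤ 3)
    (hsum1 : Summable fun k : ℕ => ((k + 1 : ℕ) : ℝ) * f (k + 1))
    (h1 : ∑' k : ℕ, ((k + 1 : ℕ) : ℝ) * f (k + 1) ≤ ρ)
    (hsum3 : Summable fun k : ℕ => ((k + 1 : ℕ) : ℝ) ^ 3 * f (k + 1)) :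
    ((∑' k : ℕ, ((k + 1 : ℕ) : ℝ) ^ μ * f (k + 1)) *
      (∑' k : ℕ, ((k + 1 : ℕ) : ℝ) ^ ν * f (k + 1))) ^ 2 ≤
      ρ ^ 3 * ∑' k : ℕ, ((k + 1 : ℕ) : ℝ) ^ 3 * f (k + 1) := by
  have hw0 : ∀ k : ℕ, (0:ℝ) < ((k + 1 : ℕ) : ℝ) := fun k => lt_of_lt_of_le one_pos (aux_one_le k)
  set S1 := ∑' k : ℕ, ((k + 1 : ℕ) : ℝ) * f (k + 1) with hS1def
  set S3 := ∑' k : ℕ, ((k + 1 : ℕ) : ℝ) ^ 3 * f (k + 1) with hS3def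
  have hS1nn : 0 ≤ S1 := tsum_nonneg fun k => mul_nonneg (hw0 k).le (hf _)
  have hS3nn : 0 ≤ S3 := tsum_nonneg fun k => mul_nonneg (by positivity) (hf _)
  rcases eq_or_lt_of_le hS1nn with hz | hpos
  · -- degenerate case: S1 = 0, so f vanishes on k ≥ 1
    have hzero : ∀ k : ℕ, f (k + 1) = 0 := by
      intro k
      have hterm : ((k + 1 : ℕ) : ℝ) * f (k + 1) ≤ S1 :=
        Summable.le_tsum hsum1 k fun j _ => mul_nonneg (hw0 j).le (hf _)
      have h0 : ((k + 1 : ℕ) : ℝ) * f (k + 1) = 0 :=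
        le_antisymm (hterm.trans_eq hz.symm) (mul_nonneg (hw0 k).le (hf _))
      exact (mul_eq_zero.mp h0).resolve_left (hw0 k).ne'
    have hzt : ∀ t : ℝ, (∑' k : ℕ, ((k + 1 : ℕ) : ℝ) ^ t * f (k + 1)) = 0 := by
      intro t; simp [hzero]
    rw [hzt μ, hzt ν]
    norm_num
    exact mul_nonneg (by positivity) hS3nn
  · have h13 : S1 ≤ S3 := by
      refine Summable.tsum_le_tsum (fun k => ?_) hsum1 hsum3
      exact mul_le_mul_of_nonneg_right (le_self_pow₀ (aux_one_le k) three_ne_zero) (hf (k + 1))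
    have hS3pos : 0 < S3 := hpos.trans_le h13
    -- reduce exponents to [1,2]
    set μ' : ℝ := max μ 1 with hμ'def
    set ν' : ℝ := max ν 1 with hν'def
    have hμ'1 : 1 ≤ μ' := le_max_right _ _
    have hν'1 : 1 ≤ ν' := le_max_right _ _
    have hμ'2 : μ' ≤ 2 := max_le hμ2 one_le_two
    have hν'2 : ν' ≤ 2 := max_le hν2 one_le_two
    have hs3 : μ' + ν' ≤ 3 := by
      rcases le_total μ 1 with h | h
      · rw [hμ'def, max_eq_right h]; linarith
      · rcases le_total ν 1 with h' | h'
        · rw [hμ'def, hν'def, max_eq_left h, max_eq_right h']; linarith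
        · rw [hμ'def, hν'def, max_eq_left h, max_eq_left h']; exact hμν
    set Sμ := ∑' k : ℕ, ((k + 1 : ℕ) : ℝ) ^ μ * f (k + 1) with hSμdef
    set Sν := ∑' k : ℕ, ((k + 1 : ℕ) : ℝ) ^ ν * f (k + 1) with hSνdef
    set a := ∑' k : ℕ, ((k + 1 : ℕ) : ℝ) ^ μ' * f (k + 1) with hadef
    set b := ∑' k : ℕ, ((k + 1 : ℕ) : ℝ) ^ ν' * f (k + 1) with hbdef
    have hSμnn : 0 ≤ Sμ := tsum_nonneg fun k => mul_nonneg (Real.rpow_nonneg (hw0 k).le _) (hf _)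
    have hSνnn : 0 ≤ Sν := tsum_nonneg fun k => mul_nonneg (Real.rpow_nonneg (hw0 k).le _) (hf _)
    have hann : 0 ≤ a := tsum_nonneg fun k => mul_nonneg (Real.rpow_nonneg (hw0 k).le _) (hf _)
    have hbnn : 0 ≤ b := tsum_nonneg fun k => mul_nonneg (Real.rpow_nonneg (hw0 k).le _) (hf _)
    have hA : Sμ ≤ a := aux_mono f hf hsum3 (le_max_left _ _) (by linarith)
    have hB : Sν ≤ b := aux_mono f hf hsum3 (le_max_left _ _) (by linarith)
    have hHa : a ≤ S1 ^ ((3 - μ') / 2) * S3 ^ ((μ' - 1) / 2) :=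
      aux_holder f hf hsum1 hsum3 hμ'1 hμ'2
    have hHb : b ≤ S1 ^ ((3 - ν') / 2) * S3 ^ ((ν' - 1) / 2) :=
      aux_holder f hf hsum1 hsum3 hν'1 hν'2
    set s : ℝ := μ' + ν' with hsdef
    have hs2 : 2 ≤ s := by rw [hsdef]; linarith
    have hab : a * b ≤ S1 ^ ((6 - s) / 2) * S3 ^ ((s - 2) / 2) := by
      calc a * b ≤ (S1 ^ ((3 - μ') / 2) * S3 ^ ((μ' - 1) / 2)) *
            (S1 ^ ((3 - ν') / 2) * S3 ^ ((ν' - 1) / 2)) := by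
            apply mul_le_mul hHa hHb hbnn
            positivity
        _ = S1 ^ ((6 - s) / 2) * S3 ^ ((s - 2) / 2) := by
            rw [mul_mul_mul_comm, ← Real.rpow_add hpos, ← Real.rpow_add hS3pos]
            rw [show (3 - μ') / 2 + (3 - ν') / 2 = (6 - s) / 2 by rw [hsdef]; ring,
              show (μ' - 1) / 2 + (ν' - 1) / 2 = (s - 2) / 2 by rw [hsdef]; ring]
    have hsq : (S1 ^ ((6 - s) / 2) * S3 ^ ((s - 2) / 2)) ^ 2 = S1 ^ (6 - s) * S3 ^ (s - 2) := by
      rw [mul_pow, ← Real.rpow_natCast (S1 ^ ((6 - s) / 2)) 2,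
        ← Real.rpow_natCast (S3 ^ ((s - 2) / 2)) 2,
        ← Real.rpow_mul hS1nn, ← Real.rpow_mul hS3pos.le]
      norm_num
    have hP : S1 ^ (3 - s) * S3 ^ (s - 3) ≤ 1 := by
      have h1' : S1 ^ (3 - s) ≤ S3 ^ (3 - s) := Real.rpow_le_rpow hS1nn h13 (by linarith)
      calc S1 ^ (3 - s) * S3 ^ (s - 3) ≤ S3 ^ (3 - s) * S3 ^ (s - 3) :=
            mul_le_mul_of_nonneg_right h1' (Real.rpow_nonneg hS3pos.le _)
        _ = 1 := by rw [← Real.rpow_add hS3pos]; norm_num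
    have heq : S1 ^ (6 - s) * S3 ^ (s - 2) = (S1 ^ (3:ℝ) * S3) * (S1 ^ (3 - s) * S3 ^ (s - 3)) := by
      rw [show (6 - s : ℝ) = 3 + (3 - s) by ring, show (s - 2 : ℝ) = 1 + (s - 3) by ring,
        Real.rpow_add hpos, Real.rpow_add hS3pos, Real.rpow_one]
      ring
    have hfin : S1 ^ (3:ℝ) * S3 ≤ ρ ^ 3 * S3 := by
      have h3 : S1 ^ (3:ℝ) = S1 ^ (3:ℕ) := by rw [← Real.rpow_natCast]; norm_num
      rw [h3]
      exact mul_le_mul_of_nonneg_right (pow_le_pow_left₀ hS1nn h1 3) hS3pos.le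
    calc (Sμ * Sν) ^ 2 ≤ (a * b) ^ 2 := by
          apply pow_le_pow_left₀ (mul_nonneg hSμnn hSνnn)
          exact mul_le_mul hA hB hSνnn hann
      _ ≤ (S1 ^ ((6 - s) / 2) * S3 ^ ((s - 2) / 2)) ^ 2 := by
          apply pow_le_pow_left₀ (mul_nonneg hann hbnn) hab
      _ = S1 ^ (6 - s) * S3 ^ (s - 2) := hsq
      _ = (S1 ^ (3:ℝ) * S3) * (S1 ^ (3 - s) * S3 ^ (s - 3)) := heq
      _ ≤ (S1 ^ (3:ℝ) * S3) * 1 := by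
          apply mul_le_mul_of_nonneg_left hP
          positivity
      _ = S1 ^ (3:ℝ) * S3 := mul_one _
      _ ≤ ρ ^ 3 * S3 := hfin
end

section
/- (Pointwise moment drift bound, the key differential inequality in Proposition 3.1.) Let the jump rates c be symmetric (c(k,l) = c(l,k) for all k,l ∈ ℕ) with c(0,l) = 0 for all l, and satisfy the growth bound c(k,l) ≤ C(k^μ l^ν + k^ν l^μ) for all k,l with constants C > 0 and 0 ≤ μ, ν ≤ 2, μ + ν ≤ 3. Then for every integer n ≥ 2 there exists a constant K > 0 depending only on n such that for every L ≥ 2, every ρ > 0, and every configuration η : Fin L → ℕ with (1/L) ∑_{x} η(x) ≤ ρ, one has (1/L) ∑_{x} (ℒ(·(x))^n)(η) ≤ K C ρ (1/L) ∑_{x} (η(x))^n, where (ℒ(·(x))^n)(η) denotes ℒ applied to the function η ↦ (η(x))^n. -/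
open Finset Real

section AuxStmt8


lemma aux_conv (n : ℕ) (x : ℝ) (hx : 1 ≤ x) :
    2 * x ^ n ≤ (x + 1) ^ n + (x - 1) ^ n := by
  rcases n with _ | m
  · norm_num
  · have h := add_pow_le (by linarith : (0:ℝ) ≤ x - 1) (by linarith : (0:ℝ) ≤ x + 1) (m + 1)
    rw [show x - 1 + (x + 1) = 2 * x by ring, mul_pow] at h
    have h2 : (0:ℝ) < 2 ^ m := by positivity
    have : (2:ℝ) ^ (m + 1) = 2 ^ m * 2 := by ring
    rw [this] at h
    simp only [Nat.add_sub_cancel] at h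
    nlinarith [h]

lemma aux_diff (n : ℕ) (x : ℝ) (hx : 1 ≤ x) :
    (x + 1) ^ n - (x - 1) ^ n ≤ (n : ℝ) * 2 ^ n * x ^ (n - 1) := by
  rcases Nat.eq_zero_or_pos n with hn0 | hn0
  · subst hn0; norm_num
  have hg := geom_sum₂_mul (x + 1) (x - 1) n
  rw [show x + 1 - (x - 1) = 2 by ring] at hg
  have hsum : (∑ i ∈ range n, (x + 1) ^ i * (x - 1) ^ (n - 1 - i)) ≤ (n : ℝ) * (x + 1) ^ (n - 1) := by
    calc (∑ i ∈ range n, (x + 1) ^ i * (x - 1) ^ (n - 1 - i))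
        ≤ ∑ _i ∈ range n, (x + 1) ^ (n - 1) := by
          apply Finset.sum_le_sum
          intro i hi
          have hi' : i < n := Finset.mem_range.mp hi
          have h1 : (x - 1) ^ (n - 1 - i) ≤ (x + 1) ^ (n - 1 - i) :=
            pow_le_pow_left₀ (by linarith) (by linarith) _
          calc (x + 1) ^ i * (x - 1) ^ (n - 1 - i)
              ≤ (x + 1) ^ i * (x + 1) ^ (n - 1 - i) :=
                mul_le_mul_of_nonneg_left h1 (pow_nonneg (by linarith) _)
            _ = (x + 1) ^ (i + (n - 1 - i)) := (pow_add _ _ _).symm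
            _ = (x + 1) ^ (n - 1) := by congr 1; omega
      _ = (n : ℝ) * (x + 1) ^ (n - 1) := by
          rw [Finset.sum_const, Finset.card_range, nsmul_eq_mul]
  have h2 : (x + 1) ^ (n - 1) ≤ (2 * x) ^ (n - 1) :=
    pow_le_pow_left₀ (by linarith) (by linarith) _
  have h3 : (x + 1) ^ n - (x - 1) ^ n = (∑ i ∈ range n, (x + 1) ^ i * (x - 1) ^ (n - 1 - i)) * 2 := by
    rw [hg]
  have hxn : (0:ℝ) ≤ x ^ (n - 1) := by positivity
  have h2n : (0:ℝ) ≤ 2 ^ (n - 1) := by positivity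
  have hnn : (0:ℝ) ≤ (n : ℝ) := Nat.cast_nonneg n
  have hn1 : (2:ℝ) ^ (n - 1) * 2 = 2 ^ n := by
    rw [← pow_succ]; congr 1; omega
  rw [mul_pow] at h2
  calc (x + 1) ^ n - (x - 1) ^ n
      = (∑ i ∈ range n, (x + 1) ^ i * (x - 1) ^ (n - 1 - i)) * 2 := h3
    _ ≤ ((n : ℝ) * (x + 1) ^ (n - 1)) * 2 := by linarith
    _ ≤ ((n : ℝ) * (2 ^ (n - 1) * x ^ (n - 1))) * 2 := by
          nlinarith [mul_le_mul_of_nonneg_left h2 hnn]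
    _ = (n : ℝ) * (2 ^ (n - 1) * 2) * x ^ (n - 1) := by ring
    _ = (n : ℝ) * 2 ^ n * x ^ (n - 1) := by rw [hn1]

lemma aux_delta (n : ℕ) (hn : 2 ≤ n) (x : ℝ) (hx : 1 ≤ x) :
    (x + 1) ^ n + (x - 1) ^ n - 2 * x ^ n ≤ 4 ^ n * x ^ (n - 2) := by
  induction n, hn using Nat.le_induction with
  | base =>
    have : (x + 1) ^ 2 + (x - 1) ^ 2 - 2 * x ^ 2 = 2 := by ring
    rw [this]
    norm_num
  | succ n hn ih =>
    have hid : (x + 1) ^ (n + 1) + (x - 1) ^ (n + 1) - 2 * x ^ (n + 1)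
        = x * ((x + 1) ^ n + (x - 1) ^ n - 2 * x ^ n) + ((x + 1) ^ n - (x - 1) ^ n) := by
      ring
    rw [hid, show n + 1 - 2 = n - 1 by omega]
    have hxp : x * x ^ (n - 2) = x ^ (n - 1) := by
      rw [← pow_succ']; congr 1; omega
    have t1 : x * ((x + 1) ^ n + (x - 1) ^ n - 2 * x ^ n) ≤ 4 ^ n * x ^ (n - 1) := by
      have := mul_le_mul_of_nonneg_left ih (by linarith : (0:ℝ) ≤ x)
      calc x * ((x + 1) ^ n + (x - 1) ^ n - 2 * x ^ n) ≤ x * (4 ^ n * x ^ (n - 2)) := this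
        _ = 4 ^ n * (x * x ^ (n - 2)) := by ring
        _ = 4 ^ n * x ^ (n - 1) := by rw [hxp]
    have t2 : (x + 1) ^ n - (x - 1) ^ n ≤ 4 ^ n * x ^ (n - 1) := by
      have h := aux_diff n x hx
      have hn2 : (n : ℝ) * 2 ^ n ≤ 4 ^ n := by
        have h1 : (n : ℝ) ≤ 2 ^ n := by exact_mod_cast (Nat.lt_two_pow_self (n := n)).le
        have h2 : (0:ℝ) ≤ 2 ^ n := by positivity
        calc (n : ℝ) * 2 ^ n ≤ 2 ^ n * 2 ^ n := by nlinarith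
          _ = 4 ^ n := by rw [← mul_pow]; norm_num
      have hxn : (0:ℝ) ≤ x ^ (n - 1) := by positivity
      nlinarith [h]
    have hxn : (0:ℝ) ≤ x ^ (n - 1) := by positivity
    have h4 : (0:ℝ) ≤ 4 ^ n := by positivity
    have : (4:ℝ) ^ (n + 1) = 4 * 4 ^ n := by ring
    rw [this]
    nlinarith [t1, t2]



-- if y ≤ x, 1 ≤ y, p ≤ 2, q ≤ 2, p + q ≤ 3, then x^p y^q ≤ x^2 * y (npow on RHS)
lemma aux_half (p q : ℝ) (hp0 : 0 ≤ p) (hp2 : p ≤ 2) (hq0 : 0 ≤ q) (hq2 : q ≤ 2)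
    (hpq : p + q ≤ 3) (x y : ℝ) (hx : 1 ≤ x) (hy : 1 ≤ y) (hyx : y ≤ x) :
    x ^ p * y ^ q ≤ x ^ (2:ℕ) * y := by
  have hx0 : (0:ℝ) < x := by linarith
  have hy0 : (0:ℝ) < y := by linarith
  have hx2 : x ^ (2:ℕ) = x ^ (2:ℝ) := by
    rw [← Real.rpow_natCast x 2]; norm_num
  rcases le_total q 1 with hq1 | hq1
  · have h1 : x ^ p ≤ x ^ (2:ℝ) := Real.rpow_le_rpow_of_exponent_le hx hp2
    have h2 : y ^ q ≤ y := by
      nth_rewrite 2 [← Real.rpow_one y]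
      exact Real.rpow_le_rpow_of_exponent_le hy hq1
    rw [hx2]
    exact mul_le_mul h1 h2 (Real.rpow_nonneg hy0.le q) (Real.rpow_nonneg hx0.le 2)
  · have hsplit : y ^ q = y ^ (q - 1) * y := by
      rw [← Real.rpow_add_one hy0.ne']; ring_nf
    have h1 : y ^ (q - 1) ≤ x ^ (q - 1) :=
      Real.rpow_le_rpow hy0.le hyx (by linarith)
    calc x ^ p * y ^ q = x ^ p * y ^ (q - 1) * y := by rw [hsplit]; ring
      _ ≤ x ^ p * x ^ (q - 1) * y := by
          have := mul_le_mul_of_nonneg_left h1 (Real.rpow_nonneg hx0.le p)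
          nlinarith [this]
      _ = x ^ (p + (q - 1)) * y := by rw [← Real.rpow_add hx0]
      _ ≤ x ^ (2:ℝ) * y := by
          have := Real.rpow_le_rpow_of_exponent_le hx (show p + (q-1) ≤ 2 by linarith)
          nlinarith [this]
      _ = x ^ (2:ℕ) * y := by rw [hx2]

lemma aux_mixed (p q : ℝ) (hp0 : 0 ≤ p) (hp2 : p ≤ 2) (hq0 : 0 ≤ q) (hq2 : q ≤ 2)
    (hpq : p + q ≤ 3) (x y : ℝ) (hx : 1 ≤ x) (hy : 1 ≤ y) :
    x ^ p * y ^ q ≤ x ^ (2:ℕ) * y + x * y ^ (2:ℕ) := by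
  rcases le_total y x with hyx | hxy
  · have h := aux_half p q hp0 hp2 hq0 hq2 hpq x y hx hy hyx
    nlinarith [pow_nonneg (show (0:ℝ) ≤ y by linarith) 2, show (0:ℝ) ≤ x by linarith]
  · have h := aux_half q p hq0 hq2 hp0 hp2 (by linarith) y x hy hx hxy
    nlinarith [pow_nonneg (show (0:ℝ) ≤ x by linarith) 2, show (0:ℝ) ≤ y by linarith]

-- npow lemma: x^(n-2) * (x * y^2) ≤ x^n * y + x * y^n
lemma aux_npow (n : ℕ) (hn : 2 ≤ n) (x y : ℝ) (hx : 1 ≤ x) (hy : 1 ≤ y) :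
    x ^ (n - 2) * (x * y ^ (2:ℕ)) ≤ x ^ n * y + x * y ^ n := by
  have hx0 : (0:ℝ) ≤ x := by linarith
  have hy0 : (0:ℝ) ≤ y := by linarith
  rcases le_total y x with hyx | hxy
  · -- x^(n-2) * x * y^2 ≤ x^(n-1) * y * y ≤ x^(n-1) * x * y = x^n y
    have h1 : x ^ (n-2) * (x * y^(2:ℕ)) = (x ^ (n-2) * x) * y * y := by ring
    have h2 : x ^ (n-2) * x = x ^ (n-1) := by rw [← pow_succ]; congr 1; omega
    have h3 : x ^ (n-1) * y * y ≤ x ^ (n-1) * x * y := by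
      have hp : (0:ℝ) ≤ x ^ (n-1) := by positivity
      nlinarith [mul_nonneg hp hy0]
    have h4 : x ^ (n-1) * x = x ^ n := by rw [← pow_succ]; congr 1; omega
    have h5 : (0:ℝ) ≤ x * y ^ n := by positivity
    calc x ^ (n-2) * (x * y^(2:ℕ)) = x ^ (n-1) * y * y := by rw [h1, h2]
      _ ≤ x ^ (n-1) * x * y := h3
      _ = x ^ n * y := by rw [h4]
      _ ≤ x ^ n * y + x * y ^ n := by linarith
  · -- x^(n-2) ≤ y^(n-2); x * y^(n-2) * y^2 = x * y^n
    have h1 : x ^ (n-2) ≤ y ^ (n-2) := pow_le_pow_left₀ hx0 hxy _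
    have h2 : y ^ (n-2) * y ^ (2:ℕ) = y ^ n := by rw [← pow_add]; congr 1; omega
    have h5 : (0:ℝ) ≤ x ^ n * y := by positivity
    calc x ^ (n-2) * (x * y^(2:ℕ)) = (x ^ (n-2) * y ^ (2:ℕ)) * x := by ring
      _ ≤ (y ^ (n-2) * y ^ (2:ℕ)) * x := by
          have : (0:ℝ) ≤ y ^ (2:ℕ) := by positivity
          nlinarith [mul_le_mul_of_nonneg_right h1 this, hx0]
      _ = x * y ^ n := by rw [h2]; ring
      _ ≤ x ^ n * y + x * y ^ n := by linarith

lemma aux_key (c : ℕ → ℕ → ℝ)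
    (hcnn : ∀ k l, 0 ≤ c k l) (hsym : ∀ k l, c k l = c l k) (hc0 : ∀ l, c 0 l = 0)
    (C μ ν : ℝ) (hC : 0 < C)
    (hμ0 : 0 ≤ μ) (hμ2 : μ ≤ 2) (hν0 : 0 ≤ ν) (hν2 : ν ≤ 2) (hμν : μ + ν ≤ 3)
    (hgrow : ∀ k l : ℕ, c k l ≤ C * ((k : ℝ) ^ μ * (l : ℝ) ^ ν + (k : ℝ) ^ ν * (l : ℝ) ^ μ))
    (n : ℕ) (hn : 2 ≤ n) (a b : ℕ) :
    c a b * ((((a - 1 : ℕ) : ℝ)) ^ n - ((a:ℕ):ℝ) ^ n + ((((a + 1 : ℕ)):ℝ) ^ n - ((a:ℕ):ℝ) ^ n))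
      ≤ 4 ^ (n+1) * C * (((a:ℕ):ℝ) ^ n * ((b:ℕ):ℝ) + ((a:ℕ):ℝ) * ((b:ℕ):ℝ) ^ n) := by
  rcases Nat.eq_zero_or_pos a with ha | ha
  · subst ha
    simp [hc0, zero_pow (by omega : n ≠ 0)]
  rcases Nat.eq_zero_or_pos b with hb | hb
  · subst hb
    have : c a 0 = 0 := by rw [hsym]; exact hc0 a
    simp [this, zero_pow (by omega : n ≠ 0)]
  -- now a, b ≥ 1
  set x : ℝ := (a : ℝ) with hxdef
  set y : ℝ := (b : ℝ) with hydef
  have hx : 1 ≤ x := Nat.one_le_cast.mpr ha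
  have hy : 1 ≤ y := Nat.one_le_cast.mpr hb
  have hcast1 : (((a - 1 : ℕ)) : ℝ) = x - 1 := by
    rw [Nat.cast_sub ha]; norm_num; rfl
  have hcast2 : (((a + 1 : ℕ)) : ℝ) = x + 1 := by push_cast; ring
  rw [hcast1, hcast2]
  have hΔeq : (x - 1) ^ n - x ^ n + ((x + 1) ^ n - x ^ n)
      = (x + 1) ^ n + (x - 1) ^ n - 2 * x ^ n := by ring
  rw [hΔeq]
  have hΔ0 : 0 ≤ (x + 1) ^ n + (x - 1) ^ n - 2 * x ^ n := by
    have := aux_conv n x hx; linarith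
  have hΔle := aux_delta n hn x hx
  have hgb := hgrow a b
  have hc0' := hcnn a b
  have hE : (0:ℝ) < 4 ^ n := by positivity
  have hQ : (0:ℝ) ≤ x ^ (n - 2) := by positivity
  -- step 1
  have step1 : c a b * ((x + 1) ^ n + (x - 1) ^ n - 2 * x ^ n)
      ≤ (C * (x ^ μ * y ^ ν + x ^ ν * y ^ μ)) * (4 ^ n * x ^ (n - 2)) :=
    mul_le_mul hgb hΔle hΔ0 (le_trans hc0' hgb)
  have A1 := aux_mixed μ ν hμ0 hμ2 hν0 hν2 hμν x y hx hy
  have A2 := aux_mixed ν μ hν0 hν2 hμ0 hμ2 (by linarith) x y hx hy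
  have A3 : x ^ (n - 2) * (x ^ (2:ℕ) * y) = x ^ n * y := by
    rw [← mul_assoc, ← pow_add]
    congr 2; omega
  have A4 := aux_npow n hn x y hx hy
  have step2 : (C * (x ^ μ * y ^ ν + x ^ ν * y ^ μ)) * (4 ^ n * x ^ (n - 2))
      ≤ (C * (2 * (x ^ (2:ℕ) * y + x * y ^ (2:ℕ)))) * (4 ^ n * x ^ (n - 2)) := by
    have hfac : (0:ℝ) ≤ 4 ^ n * x ^ (n-2) := by positivity
    have : x ^ μ * y ^ ν + x ^ ν * y ^ μ ≤ 2 * (x ^ (2:ℕ) * y + x * y ^ (2:ℕ)) := by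
      linarith
    exact mul_le_mul_of_nonneg_right (mul_le_mul_of_nonneg_left this hC.le) hfac
  have step3 : (C * (2 * (x ^ (2:ℕ) * y + x * y ^ (2:ℕ)))) * (4 ^ n * x ^ (n - 2))
      = 2 * 4 ^ n * C * (x ^ (n-2) * (x ^ (2:ℕ) * y) + x ^ (n-2) * (x * y ^ (2:ℕ))) := by
    ring
  have step4 : 2 * 4 ^ n * C * (x ^ (n-2) * (x ^ (2:ℕ) * y) + x ^ (n-2) * (x * y ^ (2:ℕ)))
      ≤ 2 * 4 ^ n * C * (x ^ n * y + (x ^ n * y + x * y ^ n)) := by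
    rw [A3]
    have hfac : (0:ℝ) ≤ 2 * 4 ^ n * C := by positivity
    exact mul_le_mul_of_nonneg_left (by linarith [A4]) hfac
  have step5 : 2 * 4 ^ n * C * (x ^ n * y + (x ^ n * y + x * y ^ n))
      ≤ 4 ^ (n+1) * C * (x ^ n * y + x * y ^ n) := by
    have h1 : (0:ℝ) ≤ 4 ^ n * C * (x * y ^ n) := by positivity
    rw [show (4:ℝ) ^ (n+1) = 4 * 4 ^ n from by ring]
    nlinarith [h1]
  linarith [step1, step2, step4, step5, step3.le, step3.ge]

end AuxStmt8


/-- pointwise moment drift bound of Proposition 3.1: for every `n ≥ 2`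
there is a constant `K > 0` depending only on `n` such that for every `L ≥ 2`, `ρ > 0`,
and configuration with density at most `ρ`, the empirical average of the generator
applied to the `n`-th occupation powers is bounded by `K C ρ` times the empirical
`n`-th moment. -/
theorem stmt8 (c : ℕ → ℕ → ℝ)
    (hcnn : ∀ k l, 0 ≤ c k l)
    (hsym : ∀ k l, c k l = c l k)
    (hc0 : ∀ l, c 0 l = 0)
    (C μ ν : ℝ) (hC : 0 < C)
    (hμ0 : 0 ≤ μ) (hμ2 : μ ≤ 2) (hν0 : 0 ≤ ν) (hν2 : ν ≤ 2) (hμν : μ + ν ≤ 3)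
    (hgrow : ∀ k l : ℕ, c k l ≤ C * ((k : ℝ) ^ μ * (l : ℝ) ^ ν + (k : ℝ) ^ ν * (l : ℝ) ^ μ)) :
    ∀ n : ℕ, 2 ≤ n → ∃ K : ℝ, 0 < K ∧
      ∀ L : ℕ, 2 ≤ L → ∀ ρ : ℝ, 0 < ρ → ∀ η : Fin L → ℕ,
        (1 / (L : ℝ)) * (∑ x : Fin L, (η x : ℝ)) ≤ ρ →
        (1 / (L : ℝ)) * (∑ x : Fin L, gen c (fun ξ => ((ξ x : ℕ) : ℝ) ^ n) η) ≤
          K * C * ρ * ((1 / (L : ℝ)) * ∑ x : Fin L, ((η x : ℕ) : ℝ) ^ n) := by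
  intro n hn
  refine ⟨4 ^ (n + 2), by positivity, ?_⟩
  intro L hL ρ hρ η hdens
  have hl2 : (2:ℝ) ≤ (L:ℝ) := by exact_mod_cast hL
  have hl0 : (0:ℝ) < (L:ℝ) := by linarith
  have hl1 : (0:ℝ) < (L:ℝ) - 1 := by linarith
  set M : ℝ := ∑ x : Fin L, ((η x : ℕ):ℝ) ^ n with hMdef
  set P : ℝ := ∑ x : Fin L, ((η x : ℕ):ℝ) with hPdef
  have hM0 : 0 ≤ M := by positivity
  have hP0 : 0 ≤ P := by positivity
  have hPle : P ≤ ρ * (L:ℝ) := by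
    have h := mul_le_mul_of_nonneg_left hdens hl0.le
    have h2 : (L:ℝ) * (1 / (L:ℝ) * P) = P := by field_simp
    rw [h2] at h
    linarith
  -- step 1: pair computation
  have hpair : ∀ u v : Fin L, u ≠ v →
      (∑ x : Fin L, ((((move η u v) x : ℕ):ℝ) ^ n - ((η x : ℕ):ℝ) ^ n))
      = (((η u - 1 : ℕ):ℝ) ^ n - ((η u:ℕ):ℝ) ^ n + ((((η v + 1 : ℕ)):ℝ) ^ n - ((η v:ℕ):ℝ) ^ n)) := by
    intro u v huv
    have hz : ∀ z ∈ (univ : Finset (Fin L)), z ∉ ({u, v} : Finset (Fin L)) →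
        ((((move η u v) z : ℕ):ℝ) ^ n - ((η z : ℕ):ℝ) ^ n) = 0 := by
      intro z _ hz
      simp only [Finset.mem_insert, Finset.mem_singleton] at hz
      push_neg at hz
      rw [show (move η u v) z = η z from by simp [move, hz.1, hz.2]]
      ring
    rw [← Finset.sum_subset (Finset.subset_univ ({u, v} : Finset (Fin L))) hz,
      Finset.sum_pair huv]
    rw [show (move η u v) u = η u - 1 from by simp [move],
      show (move η u v) v = η v + 1 from by simp [move, (Ne.symm huv : v ≠ u)]]
  -- step 2: rewrite the full sum
  have hS : (∑ x : Fin L, gen c (fun ξ => ((ξ x : ℕ):ℝ) ^ n) η)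
      = (1 / ((L:ℝ) - 1)) * ∑ u : Fin L, ∑ v : Fin L,
          (if u ≠ v then c (η u) (η v) *
            (((η u - 1 : ℕ):ℝ) ^ n - ((η u:ℕ):ℝ) ^ n
              + ((((η v + 1 : ℕ)):ℝ) ^ n - ((η v:ℕ):ℝ) ^ n)) else 0) := by
    unfold gen
    rw [← Finset.mul_sum]
    congr 1
    rw [Finset.sum_comm]
    refine Finset.sum_congr rfl fun u _ => ?_
    rw [Finset.sum_comm]
    refine Finset.sum_congr rfl fun v _ => ?_
    rcases eq_or_ne u v with huv | huv
    · simp [huv]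
    · simp only [ne_eq, huv, not_false_eq_true, if_true, ite_true]
      rw [← Finset.mul_sum]
      congr 1
      exact hpair u v huv
  -- step 3: the swap identity
  have hswap : (∑ u : Fin L, ∑ v : Fin L, (if u ≠ v then c (η u) (η v) *
          ((((η v + 1 : ℕ)):ℝ) ^ n - ((η v:ℕ):ℝ) ^ n) else 0))
      = ∑ u : Fin L, ∑ v : Fin L, (if u ≠ v then c (η u) (η v) *
          ((((η u + 1 : ℕ)):ℝ) ^ n - ((η u:ℕ):ℝ) ^ n) else 0) := by
    rw [Finset.sum_comm]
    refine Finset.sum_congr rfl fun u _ => Finset.sum_congr rfl fun v _ => ?_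
    rcases eq_or_ne u v with h | h
    · simp [h]
    · rw [if_pos (Ne.symm h), if_pos h, hsym (η v) (η u)]
  -- step 4: combine
  have hcomb : (∑ u : Fin L, ∑ v : Fin L,
        (if u ≠ v then c (η u) (η v) *
            (((η u - 1 : ℕ):ℝ) ^ n - ((η u:ℕ):ℝ) ^ n
              + ((((η v + 1 : ℕ)):ℝ) ^ n - ((η v:ℕ):ℝ) ^ n)) else 0))
      = ∑ u : Fin L, ∑ v : Fin L,
        (if u ≠ v then c (η u) (η v) *
            (((η u - 1 : ℕ):ℝ) ^ n - ((η u:ℕ):ℝ) ^ n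
              + ((((η u + 1 : ℕ)):ℝ) ^ n - ((η u:ℕ):ℝ) ^ n)) else 0) := by
    have e1 : ∀ u v : Fin L, (if u ≠ v then c (η u) (η v) *
            (((η u - 1 : ℕ):ℝ) ^ n - ((η u:ℕ):ℝ) ^ n
              + ((((η v + 1 : ℕ)):ℝ) ^ n - ((η v:ℕ):ℝ) ^ n)) else 0)
        = (if u ≠ v then c (η u) (η v) * (((η u - 1 : ℕ):ℝ) ^ n - ((η u:ℕ):ℝ) ^ n) else 0)
          + (if u ≠ v then c (η u) (η v) * ((((η v + 1 : ℕ)):ℝ) ^ n - ((η v:ℕ):ℝ) ^ n) else 0) := by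
      intro u v
      rcases eq_or_ne u v with h | h
      · simp [h]
      · rw [if_pos h, if_pos h, if_pos h, mul_add]
    have e2 : ∀ u v : Fin L, (if u ≠ v then c (η u) (η v) *
            (((η u - 1 : ℕ):ℝ) ^ n - ((η u:ℕ):ℝ) ^ n
              + ((((η u + 1 : ℕ)):ℝ) ^ n - ((η u:ℕ):ℝ) ^ n)) else 0)
        = (if u ≠ v then c (η u) (η v) * (((η u - 1 : ℕ):ℝ) ^ n - ((η u:ℕ):ℝ) ^ n) else 0)
          + (if u ≠ v then c (η u) (η v) * ((((η u + 1 : ℕ)):ℝ) ^ n - ((η u:ℕ):ℝ) ^ n) else 0) := by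
      intro u v
      rcases eq_or_ne u v with h | h
      · simp [h]
      · rw [if_pos h, if_pos h, if_pos h, mul_add]
    simp only [e1, e2, Finset.sum_add_distrib]
    rw [hswap]
  -- step 5: termwise bound
  have hbound : (∑ u : Fin L, ∑ v : Fin L,
        (if u ≠ v then c (η u) (η v) *
            (((η u - 1 : ℕ):ℝ) ^ n - ((η u:ℕ):ℝ) ^ n
              + ((((η u + 1 : ℕ)):ℝ) ^ n - ((η u:ℕ):ℝ) ^ n)) else 0))
      ≤ ∑ u : Fin L, ∑ v : Fin L,
          4 ^ (n+1) * C * (((η u:ℕ):ℝ) ^ n * ((η v:ℕ):ℝ) + ((η u:ℕ):ℝ) * ((η v:ℕ):ℝ) ^ n) := by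
    refine Finset.sum_le_sum fun u _ => Finset.sum_le_sum fun v _ => ?_
    rcases eq_or_ne u v with h | h
    · rw [if_neg (by simpa using h)]
      positivity
    · rw [if_pos h]
      exact aux_key c hcnn hsym hc0 C μ ν hC hμ0 hμ2 hν0 hν2 hμν hgrow n hn (η u) (η v)
  -- step 6: evaluate the RHS sum
  have hRHS : (∑ u : Fin L, ∑ v : Fin L,
        4 ^ (n+1) * C * (((η u:ℕ):ℝ) ^ n * ((η v:ℕ):ℝ) + ((η u:ℕ):ℝ) * ((η v:ℕ):ℝ) ^ n))
      = 4 ^ (n+1) * C * (M * P + P * M) := by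
    have e1 : ∀ u : Fin L, (∑ v : Fin L,
          4 ^ (n+1) * C * (((η u:ℕ):ℝ) ^ n * ((η v:ℕ):ℝ) + ((η u:ℕ):ℝ) * ((η v:ℕ):ℝ) ^ n))
        = 4 ^ (n+1) * C * (((η u:ℕ):ℝ) ^ n * P + ((η u:ℕ):ℝ) * M) := by
      intro u
      rw [← Finset.mul_sum]
      congr 1
      rw [Finset.sum_add_distrib, ← Finset.mul_sum, ← Finset.mul_sum]
    rw [Finset.sum_congr rfl fun u _ => e1 u, ← Finset.mul_sum]
    congr 1
    rw [Finset.sum_add_distrib, ← Finset.sum_mul, ← Finset.sum_mul]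
  -- step 7: assemble
  rw [hS, hcomb]
  have hT : (∑ u : Fin L, ∑ v : Fin L,
        (if u ≠ v then c (η u) (η v) *
            (((η u - 1 : ℕ):ℝ) ^ n - ((η u:ℕ):ℝ) ^ n
              + ((((η u + 1 : ℕ)):ℝ) ^ n - ((η u:ℕ):ℝ) ^ n)) else 0))
      ≤ 4 ^ (n+1) * C * (2 * (M * (ρ * (L:ℝ)))) := by
    refine le_trans (hbound.trans hRHS.le) ?_
    have h1 : M * P + P * M ≤ 2 * (M * (ρ * (L:ℝ))) := by nlinarith
    have h2 : (0:ℝ) ≤ 4 ^ (n+1) * C := by positivity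
    exact mul_le_mul_of_nonneg_left h1 h2
  calc (1 / (L:ℝ)) * ((1 / ((L:ℝ) - 1)) * (∑ u : Fin L, ∑ v : Fin L,
        (if u ≠ v then c (η u) (η v) *
            (((η u - 1 : ℕ):ℝ) ^ n - ((η u:ℕ):ℝ) ^ n
              + ((((η u + 1 : ℕ)):ℝ) ^ n - ((η u:ℕ):ℝ) ^ n)) else 0)))
      ≤ (1 / (L:ℝ)) * ((1 / ((L:ℝ) - 1)) * (4 ^ (n+1) * C * (2 * (M * (ρ * (L:ℝ)))))) := by
        refine mul_le_mul_of_nonneg_left ?_ (by positivity)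
        exact mul_le_mul_of_nonneg_left hT (by positivity)
    _ ≤ 4 ^ (n + 2) * C * ρ * ((1 / (L:ℝ)) * M) := by
        rw [show (4:ℝ) ^ (n+2) = 4 * 4 ^ (n+1) from by ring]
        have hE : (0:ℝ) < (4:ℝ) ^ (n+1) := by positivity
        have hne : (L:ℝ) ≠ 0 := hl0.ne'
        have hne1 : (L:ℝ) - 1 ≠ 0 := hl1.ne'
        have hcert : 0 ≤ (4:ℝ) ^ (n+1) * C * ρ * M * ((L:ℝ) * ((L:ℝ) - 2)) := by
          apply mul_nonneg
          · positivity
          · apply mul_nonneg hl0.le; linarith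
        field_simp
        nlinarith [hcert, mul_nonneg hM0 (show (0:ℝ) ≤ (L:ℝ) - 2 by linarith)]
end

section
/- (Derivation of the tagged occupation generator, equation (5.3).) Let L ≥ 2 and let the jump rates c satisfy c(k,l) ≥ 0 and c(0,l) = 0 for all k,l ∈ ℕ. Let g : ℕ → ℝ, let η : Fin L → ℕ be a configuration and x a site with n := η(x) ≥ 1, and set G(η, x) = g(η(x)). Then (L̃G)(η, x) = (L/(L−1)) ∑_{k≥1} c(k,n) F_k(η) (g(n+1) − g(n)) + (L/(L−1)) [ ((n−1)/n) ∑_{k≥0} c(n,k) F_k(η) (g(n−1) − g(n)) + (1/n) ∑_{k≥0} c(n,k) F_k(η) (g(k+1) − g(n)) ] − (1/(L−1)) c(n,n) [ ((n+1)/n)(g(n+1) − g(n)) + ((n−1)/n)(g(n−1) − g(n)) ]. -/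
/-- The tagged-particle generator acting on `G : configuration × tagged site → ℝ`. -/
noncomputable def tgen {L : ℕ} (c : ℕ → ℕ → ℝ) (G : (Fin L → ℕ) × Fin L → ℝ)
    (η : Fin L → ℕ) (x : Fin L) : ℝ :=
  (1 / ((L : ℝ) - 1)) *
    ∑ y : Fin L, ∑ z : Fin L,
      (if y ≠ x ∧ z ≠ y then c (η y) (η z) * (G (move η y z, x) - G (η, x)) else 0)
  + (1 / ((L : ℝ) - 1)) *
    ∑ z : Fin L,
      (if z ≠ x then
        c (η x) (η z) *
          ((((η x : ℝ) - 1) / (η x : ℝ)) * (G (move η x z, x) - G (η, x))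
            + (1 / (η x : ℝ)) * (G (move η x z, z) - G (η, x)))
      else 0)

lemma emp_tsum {L : ℕ} (η : Fin L → ℕ) (f : ℕ → ℝ) :
    ∑' k : ℕ, f k * emp η k = (∑ z : Fin L, f (η z)) / L := by
  classical
  have hs : ∀ k ∉ Finset.image η Finset.univ, f k * emp η k = 0 := by
    intro k hk
    have h0 : (Finset.univ.filter (fun z : Fin L => η z = k)) = ∅ :=
      Finset.filter_false_of_mem fun z _ h =>
        hk (Finset.mem_image.mpr ⟨z, Finset.mem_univ z, h⟩)
    simp [emp, h0]
  rw [tsum_eq_sum hs, Finset.sum_comp f η, Finset.sum_div]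
  refine Finset.sum_congr rfl fun k _ => ?_
  simp only [emp, nsmul_eq_mul]
  ring

lemma tsum_shift {f : ℕ → ℝ} (h0 : f 0 = 0) : ∑' k : ℕ, f (k + 1) = ∑' k : ℕ, f k := by
  refine Nat.succ_injective.tsum_eq ?_
  intro k hk
  rcases Nat.eq_zero_or_pos k with h | h
  · exact absurd (h ▸ h0) hk
  · exact ⟨k - 1, Nat.succ_pred_eq_of_pos h⟩

/-- derivation of the tagged occupation generator, equation (5.3):
for `G(η,x) = g(η(x))` and `n := η(x) ≥ 1`, the tagged generator evaluates to the
expression (5.3) in terms of the empirical measures.  Sums over `k ≥ 1` are shifted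
`tsum`s; `g(n−1)` uses truncated subtraction on `ℕ`. -/
theorem stmt12 (L : ℕ) (hL : 2 ≤ L) (c : ℕ → ℕ → ℝ)
    (hcnn : ∀ k l, 0 ≤ c k l)
    (hc0 : ∀ l, c 0 l = 0)
    (g : ℕ → ℝ) (η : Fin L → ℕ) (x : Fin L) (hx : 1 ≤ η x) :
    tgen c (fun p => g (p.1 p.2)) η x =
      ((L : ℝ) / ((L : ℝ) - 1)) *
        (∑' k : ℕ, c (k + 1) (η x) * emp η (k + 1) * (g (η x + 1) - g (η x)))
      + ((L : ℝ) / ((L : ℝ) - 1)) *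
          ((((η x : ℝ) - 1) / (η x : ℝ)) *
              (∑' k : ℕ, c (η x) k * emp η k * (g (η x - 1) - g (η x)))
            + (1 / (η x : ℝ)) *
              (∑' k : ℕ, c (η x) k * emp η k * (g (k + 1) - g (η x))))
      - (1 / ((L : ℝ) - 1)) * c (η x) (η x) *
          ((((η x : ℝ) + 1) / (η x : ℝ)) * (g (η x + 1) - g (η x))
            + (((η x : ℝ) - 1) / (η x : ℝ)) * (g (η x - 1) - g (η x))) := by
  classical
  have hL0 : (L : ℝ) ≠ 0 := by positivity
  have hL1 : (L : ℝ) - 1 ≠ 0 := by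
    have : (2 : ℝ) ≤ (L : ℝ) := by exact_mod_cast hL
    linarith
  have hn : (η x : ℝ) ≠ 0 := by
    have : (1 : ℝ) ≤ (η x : ℝ) := by exact_mod_cast hx
    linarith
  set n := η x with hndef
  set A := g (n + 1) - g n with hA
  set B := g (n - 1) - g n with hB
  -- the three tsums
  have h1 : (∑' k : ℕ, c (k + 1) n * emp η (k + 1) * A)
      = ((∑ z : Fin L, c (η z) n) * A) / L := by
    have e : ∑' k : ℕ, c (k + 1) n * emp η (k + 1) * A
        = ∑' k : ℕ, (fun m => (c m n * A) * emp η m) (k + 1) :=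
      tsum_congr fun k => by ring
    have hsh := tsum_shift (f := fun m => (c m n * A) * emp η m) (by simp [hc0])
    rw [e, hsh, emp_tsum η (fun m => c m n * A), ← Finset.sum_mul]
  have h2 : (∑' k : ℕ, c n k * emp η k * B) = ((∑ z : Fin L, c n (η z)) * B) / L := by
    have e : ∑' k : ℕ, c n k * emp η k * B = ∑' k : ℕ, (fun m => (c n m * B) * emp η m) k :=
      tsum_congr fun k => by ring
    rw [e, emp_tsum η (fun m => c n m * B), ← Finset.sum_mul]
  have h3 : (∑' k : ℕ, c n k * emp η k * (g (k + 1) - g n))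
      = (∑ z : Fin L, c n (η z) * (g (η z + 1) - g n)) / L := by
    have e : ∑' k : ℕ, c n k * emp η k * (g (k + 1) - g n)
        = ∑' k : ℕ, (fun m => (c n m * (g (m + 1) - g n)) * emp η m) k :=
      tsum_congr fun k => by ring
    rw [e, emp_tsum η (fun m => c n m * (g (m + 1) - g n))]
  -- the double sum
  have hD : (∑ y : Fin L, ∑ z : Fin L,
        (if y ≠ x ∧ z ≠ y then c (η y) (η z) * (g (move η y z x) - g (η x)) else 0))
      = (∑ y : Fin L, c (η y) n) * A - c n n * A := by
    have hyz : ∀ y : Fin L,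
        (∑ z : Fin L, (if y ≠ x ∧ z ≠ y then c (η y) (η z) * (g (move η y z x) - g (η x)) else 0))
        = if y = x then 0 else c (η y) n * A := by
      intro y
      by_cases hyx : y = x
      · subst hyx; simp
      · rw [if_neg hyx, Finset.sum_eq_single x]
        · have hxy : x ≠ y := fun h => hyx h.symm
          rw [if_pos ⟨hyx, hxy⟩]
          have : move η y x x = n + 1 := by simp [move, hxy, hndef]
          rw [this]
        · intro z _ hz
          by_cases hzy : z ≠ y
          · rw [if_pos ⟨hyx, hzy⟩]
            have hxz : x ≠ z := fun h => hz h.symm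
            have hxy : x ≠ y := fun h => hyx h.symm
            have : move η y z x = η x := by simp [move, hxy, hxz]
            rw [this]; ring
          · rw [if_neg]; tauto
        · simp
    rw [Finset.sum_congr rfl fun y _ => hyz y]
    have e : ∀ y : Fin L, (if y = x then (0:ℝ) else c (η y) n * A)
        = c (η y) n * A - (if y = x then c (η y) n * A else 0) := by
      intro y; by_cases h : y = x <;> simp [h]
    rw [Finset.sum_congr rfl fun y _ => e y, Finset.sum_sub_distrib,
      Finset.sum_ite_eq' Finset.univ x, if_pos (Finset.mem_univ x), ← Finset.sum_mul, hndef]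
  -- the single sum
  have hT : (∑ z : Fin L,
        (if z ≠ x then
          c (η x) (η z) *
            ((((η x : ℝ) - 1) / (η x : ℝ)) * (g (move η x z x) - g (η x))
              + (1 / (η x : ℝ)) * (g (move η x z z) - g (η x)))
        else 0))
      = (((n : ℝ) - 1) / n * B) * (∑ z : Fin L, c n (η z))
          + (1 / (n : ℝ)) * (∑ z : Fin L, c n (η z) * (g (η z + 1) - g n))
          - c n n * ((((n : ℝ) - 1) / n) * B + (1 / (n : ℝ)) * A) := by
    have e : ∀ z : Fin L,
        (if z ≠ x then
          c (η x) (η z) *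
            ((((η x : ℝ) - 1) / (η x : ℝ)) * (g (move η x z x) - g (η x))
              + (1 / (η x : ℝ)) * (g (move η x z z) - g (η x)))
        else 0)
        = c n (η z) * ((((n : ℝ) - 1) / n) * B + (1 / (n : ℝ)) * (g (η z + 1) - g n))
          - (if z = x then
              c n (η z) * ((((n : ℝ) - 1) / n) * B + (1 / (n : ℝ)) * (g (η z + 1) - g n))
            else 0) := by
      intro z
      by_cases h : z = x
      · subst h; simp
      · have h1 : move η x z x = n - 1 := by simp [move, hndef]
        have h2 : move η x z z = η z + 1 := by simp [move, h]
        rw [if_pos h, if_neg h, h1, h2, sub_zero, ← hndef, ← hB]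
    rw [Finset.sum_congr rfl fun z _ => e z, Finset.sum_sub_distrib,
      Finset.sum_ite_eq' Finset.univ x, if_pos (Finset.mem_univ x)]
    have split : (∑ z : Fin L, c n (η z) * ((((n : ℝ) - 1) / n) * B + (1 / (n : ℝ)) * (g (η z + 1) - g n)))
        = (((n : ℝ) - 1) / n * B) * (∑ z : Fin L, c n (η z))
          + (1 / (n : ℝ)) * (∑ z : Fin L, c n (η z) * (g (η z + 1) - g n)) := by
      rw [Finset.mul_sum, Finset.mul_sum, ← Finset.sum_add_distrib]
      exact Finset.sum_congr rfl fun z _ => by ring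
    rw [split, ← hndef, ← hA]
  simp only [tgen]
  rw [hD, hT, h1, h2, h3]
  field_simp
  ring
end

section
/- (Tagged carré du champ, identity and bounds from the proof of Proposition 5.3.) Let L ≥ 2, let the jump rates c be symmetric (c(k,l) = c(l,k) for all k,l ∈ ℕ) with c(0,l) = 0 for all l, let η : Fin L → ℕ be a configuration and let n ≥ 1 be an integer such that η(x) = n for at least one site x. Then, writing id : ℕ → ℝ for k ↦ k and sq for k ↦ k², one has (L̂^L_η sq)(n) − 2n·(L̂^L_η id)(n) = (L/(L−1)) (1/n) ∑_{k≥0} c(n,k) F_k(η) ( k² + n² − 2k(n−1) ) − (2/(L−1)) c(n,n); moreover this quantity is nonnegative and bounded above by 2 (1/n) ∑_{k≥0} c(n,k) F_k(η) (k² + n²). -/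
/-- The tagged occupation generator (5.3): for a configuration `η`, an occupation number
`n ≥ 1` and `g : ℕ → ℝ`.  Sums over `k ≥ 1` are shifted `tsum`s; `g(n−1)` uses truncated
subtraction on `ℕ`. -/
noncomputable def hatgen {L : ℕ} (c : ℕ → ℕ → ℝ) (η : Fin L → ℕ) (g : ℕ → ℝ) (n : ℕ) : ℝ :=
  ((L : ℝ) / ((L : ℝ) - 1)) *
    ∑' k : ℕ, c (k + 1) n * emp η (k + 1) * (g (n + 1) - g n)
  + ((L : ℝ) / ((L : ℝ) - 1)) *
      ((((n : ℝ) - 1) / (n : ℝ)) * ∑' k : ℕ, c n k * emp η k * (g (n - 1) - g n)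
        + (1 / (n : ℝ)) * ∑' k : ℕ, c n k * emp η k * (g (k + 1) - g n))
  - (1 / ((L : ℝ) - 1)) * c n n *
      ((((n : ℝ) + 1) / (n : ℝ)) * (g (n + 1) - g n)
        + (((n : ℝ) - 1) / (n : ℝ)) * (g (n - 1) - g n))

lemma tsum_fin (M : ℕ) (f : ℕ → ℝ) (hf : ∀ k, M ≤ k → f k = 0) :
    ∑' k, f k = ∑ k ∈ Finset.range M, f k :=
  tsum_eq_sum (fun b hb => hf b (le_of_not_gt (fun h => hb (Finset.mem_range.mpr h))))

set_option maxHeartbeats 1000000 in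
/-- tagged carré du champ, identity and bounds from Proposition 5.3:
for `sq(k) = k²` and `id(k) = k`, the tagged carré du champ at an attained occupation
number `n ≥ 1` equals the displayed expression, is nonnegative, and is bounded above by
`2 (1/n) ∑_k c(n,k) F_k(η) (k² + n²)`. -/
theorem stmt15 (L : ℕ) (hL : 2 ≤ L) (c : ℕ → ℕ → ℝ)
    (hcnn : ∀ k l, 0 ≤ c k l)
    (hsym : ∀ k l, c k l = c l k)
    (hc0 : ∀ l, c 0 l = 0)
    (η : Fin L → ℕ) (n : ℕ) (hn : 1 ≤ n) (hatt : ∃ x : Fin L, η x = n) :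
    hatgen c η (fun k => ((k : ℕ) : ℝ) ^ 2) n
        - 2 * (n : ℝ) * hatgen c η (fun k => ((k : ℕ) : ℝ)) n =
      ((L : ℝ) / ((L : ℝ) - 1)) * (1 / (n : ℝ)) *
        (∑' k : ℕ, c n k * emp η k * ((k : ℝ) ^ 2 + (n : ℝ) ^ 2 - 2 * (k : ℝ) * ((n : ℝ) - 1)))
      - (2 / ((L : ℝ) - 1)) * c n n ∧
    0 ≤ hatgen c η (fun k => ((k : ℕ) : ℝ) ^ 2) n
        - 2 * (n : ℝ) * hatgen c η (fun k => ((k : ℕ) : ℝ)) n ∧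
    hatgen c η (fun k => ((k : ℕ) : ℝ) ^ 2) n
        - 2 * (n : ℝ) * hatgen c η (fun k => ((k : ℕ) : ℝ)) n ≤
      2 * (1 / (n : ℝ)) *
        (∑' k : ℕ, c n k * emp η k * ((k : ℝ) ^ 2 + (n : ℝ) ^ 2)) := by
  classical
  set M := (Finset.univ.image η).sup id + 1 with hM
  have hLpos : (0:ℝ) < L := by
    have : (2:ℝ) ≤ L := by exact_mod_cast hL
    linarith
  have hL1 : (0:ℝ) < (L:ℝ) - 1 := by
    have : (2:ℝ) ≤ L := by exact_mod_cast hL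
    linarith
  have hnpos : (0:ℝ) < n := by exact_mod_cast hn
  have hn0 : (n:ℝ) ≠ 0 := ne_of_gt hnpos
  have hnM : n < M := by
    obtain ⟨x, hx⟩ := hatt
    have : η x ≤ (Finset.univ.image η).sup id :=
      Finset.le_sup (f := id) (Finset.mem_image_of_mem η (Finset.mem_univ x))
    omega
  have hempnn : ∀ k, 0 ≤ emp η k := fun k => by unfold emp; positivity
  have hemp0 : ∀ k, M ≤ k → emp η k = 0 := by
    intro k hk
    unfold emp
    have he : (Finset.univ.filter (fun x : Fin L => η x = k)) = ∅ := by
      rw [Finset.filter_eq_empty_iff]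
      intro x _ hx
      have : η x ≤ (Finset.univ.image η).sup id :=
        Finset.le_sup (f := id) (Finset.mem_image_of_mem η (Finset.mem_univ x))
      omega
    rw [he]; simp
  have hempn : 1 / (L:ℝ) ≤ emp η n := by
    obtain ⟨x, hx⟩ := hatt
    have hcard : 1 ≤ (Finset.univ.filter (fun y : Fin L => η y = n)).card := by
      apply Finset.card_pos.mpr
      exact ⟨x, Finset.mem_filter.mpr ⟨Finset.mem_univ x, hx⟩⟩
    unfold emp
    exact (div_le_div_iff_of_pos_right hLpos).mpr (by exact_mod_cast hcard)
  -- general finite-sum formula for hatgen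
  have hgen : ∀ g : ℕ → ℝ, hatgen c η g n =
      ((L : ℝ) / ((L : ℝ) - 1)) *
        ((∑ k ∈ Finset.range M, c n k * emp η k) * (g (n + 1) - g n))
      + ((L : ℝ) / ((L : ℝ) - 1)) *
          ((((n : ℝ) - 1) / (n : ℝ)) *
              ((∑ k ∈ Finset.range M, c n k * emp η k) * (g (n - 1) - g n))
            + (1 / (n : ℝ)) * ∑ k ∈ Finset.range M, c n k * emp η k * (g (k + 1) - g n))
      - (1 / ((L : ℝ) - 1)) * c n n *
          ((((n : ℝ) + 1) / (n : ℝ)) * (g (n + 1) - g n)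
            + (((n : ℝ) - 1) / (n : ℝ)) * (g (n - 1) - g n)) := by
    intro g
    have e1 : ∑' k : ℕ, c (k + 1) n * emp η (k + 1) * (g (n + 1) - g n) =
        (∑ k ∈ Finset.range M, c n k * emp η k) * (g (n + 1) - g n) := by
      rw [tsum_fin M _ (fun k hk => by rw [hemp0 (k+1) (by omega)]; ring)]
      calc ∑ k ∈ Finset.range M, c (k + 1) n * emp η (k + 1) * (g (n + 1) - g n)
          = ∑ k ∈ Finset.range (M + 1), c k n * emp η k * (g (n + 1) - g n)
            - c 0 n * emp η 0 * (g (n + 1) - g n) := by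
            rw [Finset.sum_range_succ' (fun k => c k n * emp η k * (g (n + 1) - g n)) M]
            ring
        _ = ∑ k ∈ Finset.range M, c k n * emp η k * (g (n + 1) - g n) := by
            rw [Finset.sum_range_succ, hemp0 M le_rfl, hc0]; ring
        _ = (∑ k ∈ Finset.range M, c n k * emp η k) * (g (n + 1) - g n) := by
            rw [Finset.sum_mul]
            exact Finset.sum_congr rfl (fun k _ => by rw [hsym])
    have e2 : ∑' k : ℕ, c n k * emp η k * (g (n - 1) - g n) =
        (∑ k ∈ Finset.range M, c n k * emp η k) * (g (n - 1) - g n) := by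
      rw [tsum_fin M _ (fun k hk => by rw [hemp0 k hk]; ring), Finset.sum_mul]
    have e3 : ∑' k : ℕ, c n k * emp η k * (g (k + 1) - g n) =
        ∑ k ∈ Finset.range M, c n k * emp η k * (g (k + 1) - g n) :=
      tsum_fin M _ (fun k hk => by rw [hemp0 k hk]; ring)
    rw [hatgen, e1, e2, e3]
  -- abbreviations
  set E := ∑ k ∈ Finset.range M, c n k * emp η k with hE
  set Q0 := ∑ k ∈ Finset.range M, c n k * emp η k * (k:ℝ)^2 with hQ0
  set Q1 := ∑ k ∈ Finset.range M, c n k * emp η k * (k:ℝ) with hQ1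
  have key : ∀ a b d : ℝ,
      (∑ k ∈ Finset.range M, c n k * emp η k * (a*(k:ℝ)^2 + b*(k:ℝ) + d))
        = a * Q0 + b * Q1 + d * E := by
    intro a b d
    rw [hQ0, hQ1, hE, Finset.mul_sum, Finset.mul_sum, Finset.mul_sum,
      ← Finset.sum_add_distrib, ← Finset.sum_add_distrib]
    exact Finset.sum_congr rfl (fun k _ => by ring)
  have hEnn : 0 ≤ E := Finset.sum_nonneg fun k _ => mul_nonneg (hcnn n k) (hempnn k)
  have hQ1nn : 0 ≤ Q1 :=
    Finset.sum_nonneg fun k _ =>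
      mul_nonneg (mul_nonneg (hcnn n k) (hempnn k)) (Nat.cast_nonneg k)
  -- casts
  have c1 : ((n + 1 : ℕ) : ℝ) = (n:ℝ) + 1 := by push_cast; ring
  have c2 : ((n - 1 : ℕ) : ℝ) = (n:ℝ) - 1 := by
    rw [Nat.cast_sub hn]; norm_num
  -- the k-dependent sums for the two g's
  have s1 : (∑ k ∈ Finset.range M, c n k * emp η k * (((k + 1 : ℕ):ℝ)^2 - ((n:ℕ):ℝ)^2))
      = Q0 + 2*Q1 + (1 - (n:ℝ)^2) * E := by
    rw [show Q0 + 2*Q1 + (1 - (n:ℝ)^2) * E = 1*Q0 + 2*Q1 + (1 - (n:ℝ)^2)*E by ring,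
      ← key 1 2 (1 - (n:ℝ)^2)]
    exact Finset.sum_congr rfl (fun k _ => by push_cast; ring)
  have s2 : (∑ k ∈ Finset.range M, c n k * emp η k * (((k + 1 : ℕ):ℝ) - ((n:ℕ):ℝ)))
      = Q1 + (1 - (n:ℝ)) * E := by
    rw [show Q1 + (1 - (n:ℝ))*E = 0*Q0 + 1*Q1 + (1 - (n:ℝ))*E by ring,
      ← key 0 1 (1 - (n:ℝ))]
    exact Finset.sum_congr rfl (fun k _ => by push_cast; ring)
  -- main identity in finite-sum form
  set S := Q0 + (n:ℝ)^2 * E - 2*((n:ℝ)-1) * Q1 with hS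
  have hD : hatgen c η (fun k => ((k : ℕ) : ℝ) ^ 2) n
      - 2 * (n : ℝ) * hatgen c η (fun k => ((k : ℕ) : ℝ)) n =
      ((L : ℝ) / ((L : ℝ) - 1)) * (1 / (n : ℝ)) * S - (2 / ((L : ℝ) - 1)) * c n n := by
    rw [hgen (fun k => ((k : ℕ) : ℝ) ^ 2), hgen (fun k => ((k : ℕ) : ℝ))]
    simp only [c1, c2, s1, s2, hS]
    field_simp
    ring
  -- the tsum on the RHS of the identity
  have hrhs : (∑' k : ℕ, c n k * emp η k *
      ((k : ℝ) ^ 2 + (n : ℝ) ^ 2 - 2 * (k : ℝ) * ((n : ℝ) - 1))) = S := by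
    rw [tsum_fin M _ (fun k hk => by rw [hemp0 k hk]; ring)]
    rw [hS, show Q0 + (n:ℝ)^2*E - 2*((n:ℝ)-1)*Q1
        = 1*Q0 + (-(2*((n:ℝ)-1)))*Q1 + ((n:ℝ)^2)*E by ring, ← key]
    exact Finset.sum_congr rfl (fun k _ => by ring)
  have hrhs2 : (∑' k : ℕ, c n k * emp η k * ((k : ℝ) ^ 2 + (n : ℝ) ^ 2))
      = Q0 + (n:ℝ)^2 * E := by
    rw [tsum_fin M _ (fun k hk => by rw [hemp0 k hk]; ring)]
    rw [show Q0 + (n:ℝ)^2*E = 1*Q0 + 0*Q1 + ((n:ℝ)^2)*E by ring, ← key]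
    exact Finset.sum_congr rfl (fun k _ => by ring)
  -- nonnegativity facts about S
  have hterm : ∀ k : ℕ, 0 ≤ (k:ℝ)^2 + (n:ℝ)^2 - 2*(k:ℝ)*((n:ℝ)-1) := by
    intro k
    nlinarith [sq_nonneg ((k:ℝ) - (n:ℝ) + 1), hnpos]
  have hSrep : S = ∑ k ∈ Finset.range M,
      c n k * emp η k * ((k:ℝ)^2 + (n:ℝ)^2 - 2*(k:ℝ)*((n:ℝ)-1)) := by
    rw [hS, show Q0 + (n:ℝ)^2*E - 2*((n:ℝ)-1)*Q1
        = 1*Q0 + (-(2*((n:ℝ)-1)))*Q1 + ((n:ℝ)^2)*E by ring, ← key]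
    exact Finset.sum_congr rfl (fun k _ => by ring)
  have hSnn : 0 ≤ S := by
    rw [hSrep]
    exact Finset.sum_nonneg fun k _ =>
      mul_nonneg (mul_nonneg (hcnn n k) (hempnn k)) (hterm k)
  have hSge : 2*(n:ℝ) * (c n n * emp η n) ≤ S := by
    rw [hSrep]
    have := Finset.single_le_sum
      (f := fun k => c n k * emp η k * ((k:ℝ)^2 + (n:ℝ)^2 - 2*(k:ℝ)*((n:ℝ)-1)))
      (fun k _ => mul_nonneg (mul_nonneg (hcnn n k) (hempnn k)) (hterm k))
      (Finset.mem_range.mpr hnM)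
    calc 2*(n:ℝ) * (c n n * emp η n)
        = c n n * emp η n * ((n:ℝ)^2 + (n:ℝ)^2 - 2*(n:ℝ)*((n:ℝ)-1)) := by ring
      _ ≤ _ := this
  clear_value S Q0 Q1 E
  refine ⟨by rw [hD, hrhs], ?_, ?_⟩
  · rw [hD]
    have hsplit : ((L : ℝ) / ((L : ℝ) - 1)) * (1 / (n : ℝ)) * S
        - (2 / ((L : ℝ) - 1)) * c n n
        = ((L:ℝ) * S - 2 * c n n * (n:ℝ)) / (((L:ℝ) - 1) * (n:ℝ)) := by
      field_simp
    rw [hsplit]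
    apply div_nonneg ?_ (le_of_lt (mul_pos hL1 hnpos))
    have h1 : 2*(n:ℝ) * (c n n * (1/(L:ℝ))) ≤ 2*(n:ℝ) * (c n n * emp η n) := by
      apply mul_le_mul_of_nonneg_left ?_ (by positivity)
      exact mul_le_mul_of_nonneg_left hempn (hcnn n n)
    have h2 : (L:ℝ) * (2*(n:ℝ) * (c n n * (1/(L:ℝ)))) = 2 * c n n * (n:ℝ) := by
      field_simp
    have h3 : 2*(n:ℝ) * (c n n * (1/(L:ℝ))) ≤ S := le_trans h1 hSge
    have h4 : (L:ℝ) * (2*(n:ℝ) * (c n n * (1/(L:ℝ)))) ≤ (L:ℝ) * S :=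
      mul_le_mul_of_nonneg_left h3 (le_of_lt hLpos)
    linarith [h4, h2]
  · rw [hD, hrhs2]
    have hA2 : (L:ℝ) / ((L:ℝ) - 1) ≤ 2 := by
      rw [div_le_iff₀ hL1]
      have : (2:ℝ) ≤ L := by exact_mod_cast hL
      linarith
    have hn1 : (1:ℝ) ≤ n := by exact_mod_cast hn
    have hST : S ≤ Q0 + (n:ℝ)^2 * E := by
      rw [hS]
      have : 0 ≤ 2*((n:ℝ)-1)*Q1 :=
        mul_nonneg (mul_nonneg (by norm_num) (by linarith)) hQ1nn
      linarith
    have hBc : 0 ≤ (2 / ((L : ℝ) - 1)) * c n n :=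
      mul_nonneg (div_nonneg (by norm_num) hL1.le) (hcnn n n)
    have hinv : 0 ≤ 1/(n:ℝ) := by positivity
    have f1 : ((L:ℝ)/((L:ℝ)-1))*((1/(n:ℝ))*S) ≤ 2*((1/(n:ℝ))*S) :=
      mul_le_mul_of_nonneg_right hA2 (mul_nonneg hinv hSnn)
    have f2 : (1/(n:ℝ))*S ≤ (1/(n:ℝ))*(Q0+(n:ℝ)^2*E) := mul_le_mul_of_nonneg_left hST hinv
    have e : ((L:ℝ)/((L:ℝ)-1))*(1/(n:ℝ))*S = ((L:ℝ)/((L:ℝ)-1))*((1/(n:ℝ))*S) :=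
      mul_assoc _ _ _
    have e2 : 2*(1/(n:ℝ))*(Q0+(n:ℝ)^2*E) = 2*((1/(n:ℝ))*(Q0+(n:ℝ)^2*E)) := by ring
    linarith [f1, f2, hBc, e, e2]
end

section
/- (Generator comparison estimate, from the characterization of the limit in Theorem 5.1.) Let L ≥ 2, let the jump rates c be symmetric (c(k,l) = c(l,k) for all k,l ∈ ℕ) with c(0,l) = 0 for all l, let n ≥ 1 be an integer, let η : Fin L → ℕ be a configuration, and let f : ℕ → ℝ with f_k ≥ 0 and ∑_{l≥0} c(n,l) f_l < ∞. Define the limit generator (L̂_f g)(n) = μ_n (g(n+1) − g(n)) + ((n−1)/n) μ_n (g(n−1) − g(n)) + (1/n) ∑_{k≥0} c(n,k) f_k (g(k+1) − g(n)), where μ_n = ∑_{l≥1} c(n,l) f_l. Then for every g : ℕ → ℝ with |g(k)| ≤ M for all k, |(L̂_f g)(n) − ((L−1)/L)·(L̂^L_η g)(n)| ≤ 4M ( ∑_{k≥0} c(k,n) |F_k(η) − f_k| + c(n,n)/L ). -/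
/-- generator comparison estimate from the proof of Theorem 5.1:
with `μ_n = ∑_{l≥1} c(n,l) f_l`, the limit generator
`(L̂_f g)(n) = μ_n(g(n+1)−g(n)) + ((n−1)/n)μ_n(g(n−1)−g(n)) + (1/n)∑_k c(n,k)f_k(g(k+1)−g(n))`
differs from `((L−1)/L)·(L̂^L_η g)(n)` by at most
`4M(∑_k c(k,n)|F_k(η) − f_k| + c(n,n)/L)` for `|g| ≤ M`. -/
theorem stmt16 (L : ℕ) (hL : 2 ≤ L) (c : ℕ → ℕ → ℝ)
    (hcnn : ∀ k l, 0 ≤ c k l)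
    (hsym : ∀ k l, c k l = c l k)
    (hc0 : ∀ l, c 0 l = 0)
    (n : ℕ) (hn : 1 ≤ n)
    (η : Fin L → ℕ)
    (f : ℕ → ℝ) (hf : ∀ k, 0 ≤ f k)
    (hsum : Summable fun l : ℕ => c n l * f l)
    (M : ℝ) (g : ℕ → ℝ) (hg : ∀ k, |g k| ≤ M) :
    |(∑' l : ℕ, c n (l + 1) * f (l + 1)) * (g (n + 1) - g n)
        + (((n : ℝ) - 1) / (n : ℝ)) * (∑' l : ℕ, c n (l + 1) * f (l + 1)) * (g (n - 1) - g n)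
        + (1 / (n : ℝ)) * (∑' k : ℕ, c n k * f k * (g (k + 1) - g n))
        - (((L : ℝ) - 1) / (L : ℝ)) * hatgen c η g n| ≤
      4 * M * ((∑' k : ℕ, c k n * |emp η k - f k|) + c n n / (L : ℝ)) := by
  have hM : 0 ≤ M := le_trans (abs_nonneg _) (hg 0)
  have hL2 : (2:ℝ) ≤ (L:ℝ) := by exact_mod_cast hL
  have hL0 : (L:ℝ) ≠ 0 := ne_of_gt (by linarith)
  have hL1 : (L:ℝ) - 1 ≠ 0 := ne_of_gt (by linarith)
  have hn1 : (1:ℝ) ≤ (n:ℝ) := by exact_mod_cast hn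
  have hn0 : (n:ℝ) ≠ 0 := ne_of_gt (by linarith)
  have hcn0 : c n 0 = 0 := by rw [hsym]; exact hc0 n
  have hempnn : ∀ k, 0 ≤ emp η k := fun k => by unfold emp; positivity
  have habs : ∀ a b : ℕ, |g a - g b| ≤ 2*M := fun a b =>
    (abs_sub (g a) (g b)).trans (by linarith [hg a, hg b])
  have hemp0 : ∀ k, k ∉ Finset.image η Finset.univ → emp η k = 0 := by
    intro k hk
    have h : Finset.univ.filter (fun x : Fin L => η x = k) = ∅ := by
      ext x
      simp only [Finset.mem_filter, Finset.mem_univ, true_and, Finset.notMem_empty, iff_false]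
      intro h
      exact hk (Finset.mem_image.mpr ⟨x, Finset.mem_univ x, h⟩)
    simp [emp, h]
  have hSemp : Summable fun k => c n k * emp η k :=
    summable_of_ne_finset_zero (s := Finset.image η Finset.univ)
      (fun k hk => by rw [hemp0 k hk, mul_zero])
  have hSempg : Summable fun k => c n k * emp η k * (g (k+1) - g n) :=
    summable_of_ne_finset_zero (s := Finset.image η Finset.univ)
      (fun k hk => by rw [hemp0 k hk, mul_zero, zero_mul])
  have hSfg : Summable fun k => c n k * f k * (g (k+1) - g n) := by
    rw [← summable_abs_iff]
    refine Summable.of_nonneg_of_le (fun k => abs_nonneg _) (fun k => ?_) (hsum.mul_right (2*M))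
    rw [abs_mul, abs_of_nonneg (mul_nonneg (hcnn n k) (hf k))]
    exact mul_le_mul_of_nonneg_left (habs _ _) (mul_nonneg (hcnn n k) (hf k))
  have hSD : Summable fun k => c n k * |f k - emp η k| := by
    refine Summable.of_nonneg_of_le (fun k => mul_nonneg (hcnn n k) (abs_nonneg _))
      (fun k => ?_) (hsum.add hSemp)
    have h1 : |f k - emp η k| ≤ f k + emp η k := by
      refine (abs_sub (f k) (emp η k)).trans ?_
      rw [abs_of_nonneg (hf k), abs_of_nonneg (hempnn k)]
    calc c n k * |f k - emp η k| ≤ c n k * (f k + emp η k) :=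
          mul_le_mul_of_nonneg_left h1 (hcnn n k)
      _ = c n k * f k + c n k * emp η k := by ring
  -- rewrite RHS sum
  have hDD : (∑' k : ℕ, c k n * |emp η k - f k|) = ∑' k : ℕ, c n k * |f k - emp η k| :=
    tsum_congr fun k => by rw [hsym, abs_sub_comm]
  rw [hDD]
  -- shift the mu sum
  have hμshift : (∑' l : ℕ, c n (l+1) * f (l+1)) = ∑' k : ℕ, c n k * f k := by
    rw [Summable.tsum_eq_zero_add hsum, hcn0, zero_mul, zero_add]
  rw [hμshift]
  set μ := ∑' k : ℕ, c n k * f k with hμ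
  set S := ∑' k : ℕ, c n k * emp η k with hS
  set Tf := ∑' k : ℕ, c n k * f k * (g (k+1) - g n) with hTf
  set Te := ∑' k : ℕ, c n k * emp η k * (g (k+1) - g n) with hTe
  set D := ∑' k : ℕ, c n k * |f k - emp η k| with hD
  have hDnn : 0 ≤ D := tsum_nonneg fun k => mul_nonneg (hcnn n k) (abs_nonneg _)
  -- key identity
  have e1 : (∑' k : ℕ, c (k+1) n * emp η (k+1) * (g (n+1) - g n))
      = S * (g (n+1) - g n) := by
    rw [tsum_mul_right]
    congr 1
    have h : (fun k : ℕ => c (k+1) n * emp η (k+1)) = fun k => c n (k+1) * emp η (k+1) := by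
      funext k; rw [hsym]
    rw [h, hS, Summable.tsum_eq_zero_add hSemp, hcn0, zero_mul, zero_add]
  have e2 : (∑' k : ℕ, c n k * emp η k * (g (n-1) - g n)) = S * (g (n-1) - g n) :=
    tsum_mul_right
  have key : μ * (g (n + 1) - g n)
        + (((n : ℝ) - 1) / (n : ℝ)) * μ * (g (n - 1) - g n)
        + (1 / (n : ℝ)) * Tf
        - (((L : ℝ) - 1) / (L : ℝ)) * hatgen c η g n
      = (μ - S) * (g (n+1) - g n)
        + (((n:ℝ)-1)/(n:ℝ)) * ((μ - S) * (g (n-1) - g n))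
        + (1/(n:ℝ)) * (Tf - Te)
        + c n n / (L:ℝ) * ((((n:ℝ)+1)/(n:ℝ)) * (g (n+1) - g n)
            + (((n:ℝ)-1)/(n:ℝ)) * (g (n-1) - g n)) := by
    rw [hatgen, e1, e2, ← hTe]
    field_simp
    ring
  rw [key]
  -- bounds
  have hμS : |μ - S| ≤ D := by
    rw [hμ, hS, ← Summable.tsum_sub hsum hSemp]
    have h1 : Summable fun k => ‖c n k * f k - c n k * emp η k‖ := by
      refine Summable.congr hSD fun k => ?_
      rw [Real.norm_eq_abs, ← mul_sub, abs_mul, abs_of_nonneg (hcnn n k)]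
    calc |∑' k, (c n k * f k - c n k * emp η k)|
        ≤ ∑' k, ‖c n k * f k - c n k * emp η k‖ := by
          rw [← Real.norm_eq_abs]; exact norm_tsum_le_tsum_norm h1
      _ = D := tsum_congr fun k => by
          rw [Real.norm_eq_abs, ← mul_sub, abs_mul, abs_of_nonneg (hcnn n k)]
  have hTfe : |Tf - Te| ≤ D * (2*M) := by
    rw [hTf, hTe, ← Summable.tsum_sub hSfg hSempg]
    have h1 : Summable fun k =>
        ‖c n k * f k * (g (k+1) - g n) - c n k * emp η k * (g (k+1) - g n)‖ := by
      refine Summable.of_nonneg_of_le (fun k => norm_nonneg _) (fun k => ?_)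
        (hSD.mul_right (2*M))
      rw [Real.norm_eq_abs,
        show c n k * f k * (g (k+1) - g n) - c n k * emp η k * (g (k+1) - g n)
          = c n k * (f k - emp η k) * (g (k+1) - g n) by ring,
        abs_mul, abs_mul, abs_of_nonneg (hcnn n k)]
      exact mul_le_mul_of_nonneg_left (habs _ _)
        (mul_nonneg (hcnn n k) (abs_nonneg _))
    calc |∑' k, (c n k * f k * (g (k+1) - g n) - c n k * emp η k * (g (k+1) - g n))|
        ≤ ∑' k, ‖c n k * f k * (g (k+1) - g n) - c n k * emp η k * (g (k+1) - g n)‖ := by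
          rw [← Real.norm_eq_abs]; exact norm_tsum_le_tsum_norm h1
      _ ≤ ∑' k, c n k * |f k - emp η k| * (2*M) := by
          refine Summable.tsum_le_tsum (fun k => ?_) h1 (hSD.mul_right (2*M))
          rw [Real.norm_eq_abs,
            show c n k * f k * (g (k+1) - g n) - c n k * emp η k * (g (k+1) - g n)
              = c n k * (f k - emp η k) * (g (k+1) - g n) by ring,
            abs_mul, abs_mul, abs_of_nonneg (hcnn n k)]
          exact mul_le_mul_of_nonneg_left (habs _ _)
            (mul_nonneg (hcnn n k) (abs_nonneg _))
      _ = D * (2*M) := tsum_mul_right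
  have hfrac1 : (0:ℝ) ≤ ((n:ℝ)-1)/(n:ℝ) := div_nonneg (by linarith) (by linarith)
  have hfrac2 : (0:ℝ) ≤ ((n:ℝ)+1)/(n:ℝ) := by positivity
  set A := (μ - S) * (g (n+1) - g n) with hA
  set B := (((n:ℝ)-1)/(n:ℝ)) * ((μ - S) * (g (n-1) - g n)) with hB
  set C := (1/(n:ℝ)) * (Tf - Te) with hC
  set E := c n n / (L:ℝ) * ((((n:ℝ)+1)/(n:ℝ)) * (g (n+1) - g n)
      + (((n:ℝ)-1)/(n:ℝ)) * (g (n-1) - g n)) with hE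
  have bA : |A| ≤ D * (2*M) := by
    rw [hA, abs_mul]
    exact mul_le_mul hμS (habs _ _) (abs_nonneg _) hDnn
  have bB : |B| ≤ (((n:ℝ)-1)/(n:ℝ)) * (D * (2*M)) := by
    rw [hB, abs_mul, abs_of_nonneg hfrac1, abs_mul]
    exact mul_le_mul_of_nonneg_left
      (mul_le_mul hμS (habs _ _) (abs_nonneg _) hDnn) hfrac1
  have bC : |C| ≤ (1/(n:ℝ)) * (D * (2*M)) := by
    rw [hC, abs_mul, abs_of_nonneg (by positivity : (0:ℝ) ≤ 1/(n:ℝ))]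
    exact mul_le_mul_of_nonneg_left hTfe (by positivity)
  have bE : |E| ≤ c n n / (L:ℝ) * ((((n:ℝ)+1)/(n:ℝ)) * (2*M) + (((n:ℝ)-1)/(n:ℝ)) * (2*M)) := by
    rw [hE, abs_mul, abs_of_nonneg (div_nonneg (hcnn n n) (by linarith) : (0:ℝ) ≤ c n n / (L:ℝ))]
    refine mul_le_mul_of_nonneg_left ?_ (div_nonneg (hcnn n n) (by linarith))
    refine (abs_add_le _ _).trans (add_le_add ?_ ?_)
    · rw [abs_mul, abs_of_nonneg hfrac2]
      exact mul_le_mul_of_nonneg_left (habs _ _) hfrac2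
    · rw [abs_mul, abs_of_nonneg hfrac1]
      exact mul_le_mul_of_nonneg_left (habs _ _) hfrac1
  have total : |A + B + C + E| ≤ |A| + |B| + |C| + |E| := by
    calc |A + B + C + E| ≤ |A + B + C| + |E| := abs_add_le _ _
      _ ≤ |A + B| + |C| + |E| := by linarith [abs_add_le (A+B) C]
      _ ≤ |A| + |B| + |C| + |E| := by linarith [abs_add_le A B]
  refine total.trans ?_
  have heq : D * (2*M) + (((n:ℝ)-1)/(n:ℝ)) * (D * (2*M)) + (1/(n:ℝ)) * (D * (2*M))
      + c n n / (L:ℝ) * ((((n:ℝ)+1)/(n:ℝ)) * (2*M) + (((n:ℝ)-1)/(n:ℝ)) * (2*M))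
      = 4 * M * (D + c n n / (L:ℝ)) := by
    field_simp
    ring
  linarith [bA, bB, bC, bE]
end

section
/- (Conservation of mass and normalization for the product-kernel mean-field equation (4.1).) Let γ > 0, T > 0, and let f : [0,T] → (ℕ → ℝ) be such that every f_k(t) ≥ 0, every t ↦ f_k(t) is continuously differentiable, sup_{t∈[0,T]} ∑_{k≥0} k^{γ+1} f_k(t) < ∞, and f satisfies for all k ≥ 0 and t ∈ [0,T]: f_k'(t) = m_γ(t) ( (k+1)^γ f_{k+1}(t) + (k−1)^γ f_{k−1}(t) − 2 k^γ f_k(t) ), where m_γ(t) = ∑_{l≥1} l^γ f_l(t) and f_{−1}(t) := 0. Then ∑_{k≥0} f_k(t) = ∑_{k≥0} f_k(0) and ∑_{k≥0} k f_k(t) = ∑_{k≥0} k f_k(0) for all t ∈ [0,T]. -/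
open MeasureTheory Set

private lemma shift_summable {a : ℕ → ℝ} (ha : Summable a) :
    Summable (fun k : ℕ => a (k - 1)) := by
  refine (summable_nat_add_iff 1).mp ?_
  simpa using ha

private lemma telescope0 {a : ℕ → ℝ} (ha : Summable a) (h0 : a 0 = 0) :
    ∑' k : ℕ, (a (k + 1) + a (k - 1) - 2 * a k) = 0 := by
  have h1 : Summable fun k : ℕ => a (k + 1) := (summable_nat_add_iff 1).mpr ha
  have h2 : Summable fun k : ℕ => a (k - 1) := shift_summable ha
  have e1 : ∑' k : ℕ, a (k + 1) = ∑' k, a k := by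
    rw [ha.tsum_eq_zero_add, h0, zero_add]
  have e2 : ∑' k : ℕ, a (k - 1) = ∑' k, a k := by
    rw [h2.tsum_eq_zero_add]
    simp [h0]
  rw [(h1.add h2).tsum_sub (ha.mul_left 2), h1.tsum_add h2, e1, e2, tsum_mul_left]
  ring

private lemma telescope1 {a : ℕ → ℝ} (ha : Summable a)
    (hb : Summable fun k : ℕ => (k : ℝ) * a k) (h0 : a 0 = 0) :
    ∑' k : ℕ, (k : ℝ) * (a (k + 1) + a (k - 1) - 2 * a k) = 0 := by
  have hb1 : Summable fun k : ℕ => ((k : ℝ) + 1) * a (k + 1) := by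
    have := (summable_nat_add_iff 1).mpr hb
    refine this.congr fun k => ?_
    push_cast
    ring
  have ha1 : Summable fun k : ℕ => a (k + 1) := (summable_nat_add_iff 1).mpr ha
  have h1 : Summable fun k : ℕ => (k : ℝ) * a (k + 1) := by
    refine (hb1.sub ha1).congr fun k => ?_
    ring
  have h2' : Summable fun k : ℕ => (k : ℝ) * a k + a k := hb.add ha
  have h2 : Summable fun k : ℕ => (k : ℝ) * a (k - 1) := by
    refine (summable_nat_add_iff 1).mp ?_
    refine h2'.congr fun k => ?_
    push_cast
    ring
  have e1 : ∑' k : ℕ, (k : ℝ) * a (k + 1) = (∑' k : ℕ, (k : ℝ) * a k) - ∑' k, a k := by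
    have : ∑' k : ℕ, (k : ℝ) * a (k + 1)
        = ∑' k : ℕ, (((k : ℝ) + 1) * a (k + 1) - a (k + 1)) := by
      refine tsum_congr fun k => ?_; ring
    rw [this, hb1.tsum_sub ha1]
    have eb : ∑' k : ℕ, ((k : ℝ) + 1) * a (k + 1) = ∑' k : ℕ, (k : ℝ) * a k := by
      have hfe : (fun k : ℕ => ((k : ℝ) + 1) * a (k + 1))
          = fun k : ℕ => ((k + 1 : ℕ) : ℝ) * a (k + 1) := funext fun k => by push_cast; ring
      rw [hfe, hb.tsum_eq_zero_add]
      simp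
    have ea : ∑' k : ℕ, a (k + 1) = ∑' k, a k := by
      rw [ha.tsum_eq_zero_add, h0, zero_add]
    rw [eb, ea]
  have e2 : ∑' k : ℕ, (k : ℝ) * a (k - 1) = (∑' k : ℕ, (k : ℝ) * a k) + ∑' k, a k := by
    have h3 : ∑' k : ℕ, ((k : ℝ) + 1) * a k = (∑' k : ℕ, (k : ℝ) * a k) + ∑' k, a k := by
      rw [← hb.tsum_add ha]
      exact tsum_congr fun k => by ring
    rw [h2.tsum_eq_zero_add]
    push_cast
    rw [h3]
    ring
  have : ∑' k : ℕ, (k : ℝ) * (a (k + 1) + a (k - 1) - 2 * a k)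
      = ∑' k : ℕ, ((k : ℝ) * a (k + 1) + (k : ℝ) * a (k - 1) - 2 * ((k : ℝ) * a k)) := by
    refine tsum_congr fun k => ?_; ring
  rw [this, (h1.add h2).tsum_sub (hb.mul_left 2), h1.tsum_add h2, e1, e2, tsum_mul_left]
  ring
open MeasureTheory Set

private lemma summable_weight {γ : ℝ} {c : ℕ → ℝ} (hc : ∀ k, 0 ≤ c k)
    (hsum : Summable fun k : ℕ => (k : ℝ) ^ (γ + 1) * c k)
    (w : ℕ → ℝ) (hw : ∀ k : ℕ, 1 ≤ k → |w k| ≤ (k : ℝ) ^ (γ + 1)) :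
    Summable fun k : ℕ => w k * c k := by
  refine (summable_nat_add_iff 1).mp ?_
  have hg : Summable fun n : ℕ => ((n + 1 : ℕ) : ℝ) ^ (γ + 1) * c (n + 1) :=
    (summable_nat_add_iff 1).mpr hsum
  refine Summable.of_norm_bounded hg fun n => ?_
  have h1 : ‖w (n + 1) * c (n + 1)‖ = |w (n + 1)| * c (n + 1) := by
    rw [norm_mul, Real.norm_eq_abs, Real.norm_eq_abs, abs_of_nonneg (hc (n + 1))]
  rw [h1]
  exact mul_le_mul_of_nonneg_right (hw (n + 1) (Nat.succ_le_succ (Nat.zero_le n))) (hc (n + 1))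

private lemma one_le_rpow_nat {γ : ℝ} (hγ : 0 < γ) {k : ℕ} (hk : 1 ≤ k) :
    (1 : ℝ) ≤ (k : ℝ) ^ (γ + 1) :=
  Real.one_le_rpow (by exact_mod_cast hk) (by linarith)

private lemma nat_le_rpow {γ : ℝ} (hγ : 0 < γ) {k : ℕ} (hk : 1 ≤ k) :
    (k : ℝ) ≤ (k : ℝ) ^ (γ + 1) := by
  have h1 : (1 : ℝ) ≤ (k : ℝ) := by exact_mod_cast hk
  calc (k : ℝ) = (k : ℝ) ^ (1 : ℝ) := (Real.rpow_one _).symm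
    _ ≤ (k : ℝ) ^ (γ + 1) := Real.rpow_le_rpow_of_exponent_le h1 (by linarith)

private lemma pow_g_le_rpow {γ : ℝ} (hγ : 0 < γ) {k : ℕ} (hk : 1 ≤ k) :
    (k : ℝ) ^ γ ≤ (k : ℝ) ^ (γ + 1) := by
  have h1 : (1 : ℝ) ≤ (k : ℝ) := by exact_mod_cast hk
  exact Real.rpow_le_rpow_of_exponent_le h1 (by linarith)

private lemma mul_pow_eq_rpow {γ : ℝ} (k : ℕ) (hγ : 0 < γ) :
    (k : ℝ) * (k : ℝ) ^ γ = (k : ℝ) ^ (γ + 1) := by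
  rcases Nat.eq_zero_or_pos k with h | h
  · subst h; simp [Real.zero_rpow (by linarith : γ + 1 ≠ 0)]
  · have h0 : (0 : ℝ) < (k : ℝ) := by exact_mod_cast h
    rw [Real.rpow_add h0, Real.rpow_one]
    ring

private lemma ptwise_le {γ : ℝ} (hγ : 0 < γ) {c : ℕ → ℝ} (hc : ∀ k, 0 ≤ c k) (k : ℕ) :
    (k : ℝ) ^ γ * c k ≤ (k : ℝ) ^ (γ + 1) * c k := by
  rcases Nat.eq_zero_or_pos k with h | h
  · subst h
    simp [Real.zero_rpow hγ.ne', Real.zero_rpow (by linarith : γ + 1 ≠ 0)]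
  · exact mul_le_mul_of_nonneg_right (pow_g_le_rpow hγ h) (hc k)

private lemma majorant (γ B : ℝ) (hγ : 0 < γ) (c : ℕ → ℝ) (hc : ∀ k, 0 ≤ c k)
    (hsum : Summable fun k : ℕ => (k : ℝ) ^ (γ + 1) * c k)
    (hB : (∑' k : ℕ, (k : ℝ) ^ (γ + 1) * c k) ≤ B) :
    (Summable fun k : ℕ => (k : ℝ) ^ γ * c k)
    ∧ (∑' k : ℕ, (k : ℝ) ^ γ * c k) ≤ B
    ∧ (Summable fun k : ℕ => (k : ℝ) * ((k : ℝ) ^ γ * c k))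
    ∧ (∑' k : ℕ, (k : ℝ) * ((k : ℝ) ^ γ * c k)) ≤ B
    ∧ (Summable fun k : ℕ => ((k : ℝ) + 1) * (((k + 1 : ℕ) : ℝ) ^ γ * c (k + 1)
        + ((k - 1 : ℕ) : ℝ) ^ γ * c (k - 1) + 2 * ((k : ℝ) ^ γ * c k)))
    ∧ (∑' k : ℕ, ((k : ℝ) + 1) * (((k + 1 : ℕ) : ℝ) ^ γ * c (k + 1)
        + ((k - 1 : ℕ) : ℝ) ^ γ * c (k - 1) + 2 * ((k : ℝ) ^ γ * c k))) ≤ 8 * B := by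
  have hr : Summable fun k : ℕ => (k : ℝ) ^ γ * c k := by
    refine summable_weight hc hsum _ fun k hk => ?_
    rw [abs_of_nonneg (Real.rpow_nonneg (Nat.cast_nonneg k) _)]
    exact pow_g_le_rpow hγ hk
  have hr_ts : (∑' k : ℕ, (k : ℝ) ^ γ * c k) ≤ B :=
    le_trans (Summable.tsum_le_tsum (fun k => ptwise_le hγ hc k) hr hsum) hB
  have hq : Summable fun k : ℕ => (k : ℝ) * ((k : ℝ) ^ γ * c k) := by
    have := summable_weight hc hsum (fun k : ℕ => (k : ℝ) * (k : ℝ) ^ γ) (fun k hk => by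
      show |(k : ℝ) * (k : ℝ) ^ γ| ≤ (k : ℝ) ^ (γ + 1)
      rw [mul_pow_eq_rpow k hγ, abs_of_nonneg (Real.rpow_nonneg (Nat.cast_nonneg k) _)])
    exact this.congr fun k => mul_assoc _ _ _
  have hq_ts : (∑' k : ℕ, (k : ℝ) * ((k : ℝ) ^ γ * c k)) ≤ B := by
    have he : (∑' k : ℕ, (k : ℝ) * ((k : ℝ) ^ γ * c k))
        = ∑' k : ℕ, (k : ℝ) ^ (γ + 1) * c k :=
      tsum_congr fun k => by rw [← mul_assoc, mul_pow_eq_rpow k hγ]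
    rw [he]; exact hB
  refine ⟨hr, hr_ts, hq, hq_ts, ?_, ?_⟩
  all_goals {
    have hq0 : ((0 : ℕ) : ℝ) * (((0 : ℕ) : ℝ) ^ γ * c 0) = 0 := by simp
    have hn1 : Summable fun k : ℕ =>
        ((k : ℝ) + 1) * (((k + 1 : ℕ) : ℝ) ^ γ * c (k + 1)) := by
      refine ((summable_nat_add_iff 1).mpr hq).congr fun k => ?_
      push_cast; ring
    have hn1_ts : (∑' k : ℕ, ((k : ℝ) + 1) * (((k + 1 : ℕ) : ℝ) ^ γ * c (k + 1))) ≤ B := by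
      have h1 : (∑' k : ℕ, ((k : ℝ) + 1) * (((k + 1 : ℕ) : ℝ) ^ γ * c (k + 1)))
          = ∑' k : ℕ, ((k + 1 : ℕ) : ℝ) * (((k + 1 : ℕ) : ℝ) ^ γ * c (k + 1)) :=
        tsum_congr fun k => by push_cast; ring
      have h2 := hq.tsum_eq_zero_add
      rw [h1]
      have : ∑' k : ℕ, ((k + 1 : ℕ) : ℝ) * (((k + 1 : ℕ) : ℝ) ^ γ * c (k + 1))
          = (∑' k : ℕ, (k : ℝ) * ((k : ℝ) ^ γ * c k)) - 0 := by
        rw [h2]; push_cast; ring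
      rw [this]; linarith
    have hn2' : Summable fun j : ℕ => ((j : ℝ) * ((j : ℝ) ^ γ * c j) + 2 * ((j : ℝ) ^ γ * c j)) :=
      hq.add (hr.mul_left 2)
    have hn2shift : ∀ j : ℕ,
        ((((j + 1 : ℕ)) : ℝ) + 1) * ((((j + 1 : ℕ) - 1 : ℕ) : ℝ) ^ γ * c ((j + 1) - 1))
          = (j : ℝ) * ((j : ℝ) ^ γ * c j) + 2 * ((j : ℝ) ^ γ * c j) := by
      intro j
      simp only [Nat.add_sub_cancel]
      push_cast; ring
    have hn2 : Summable fun k : ℕ =>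
        ((k : ℝ) + 1) * (((k - 1 : ℕ) : ℝ) ^ γ * c (k - 1)) := by
      refine (summable_nat_add_iff 1).mp ?_
      refine hn2'.congr fun j => ?_
      exact (hn2shift j).symm
    have hn2_ts : (∑' k : ℕ, ((k : ℝ) + 1) * (((k - 1 : ℕ) : ℝ) ^ γ * c (k - 1))) ≤ 3 * B := by
      rw [hn2.tsum_eq_zero_add]
      have h0 : (((0 : ℕ) : ℝ) + 1) * ((((0 : ℕ) - 1 : ℕ) : ℝ) ^ γ * c ((0 : ℕ) - 1)) = 0 := by
        simp [Real.zero_rpow hγ.ne']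
      have h1 : ∑' j : ℕ, ((((j + 1 : ℕ)) : ℝ) + 1) * ((((j + 1 : ℕ) - 1 : ℕ) : ℝ) ^ γ * c ((j + 1) - 1))
          = (∑' k : ℕ, (k : ℝ) * ((k : ℝ) ^ γ * c k)) + ∑' k : ℕ, 2 * ((k : ℝ) ^ γ * c k) := by
        rw [← hq.tsum_add (hr.mul_left 2)]
        exact tsum_congr hn2shift
      rw [h0, zero_add, h1, tsum_mul_left]
      linarith
    have hn3 : Summable fun k : ℕ => ((k : ℝ) + 1) * (2 * ((k : ℝ) ^ γ * c k)) := by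
      refine ((hq.mul_left 2).add (hr.mul_left 2)).congr fun k => ?_; ring
    have hn3_ts : (∑' k : ℕ, ((k : ℝ) + 1) * (2 * ((k : ℝ) ^ γ * c k))) ≤ 4 * B := by
      have h1 : ∑' k : ℕ, ((k : ℝ) + 1) * (2 * ((k : ℝ) ^ γ * c k))
          = (∑' k : ℕ, 2 * ((k : ℝ) * ((k : ℝ) ^ γ * c k))) + ∑' k : ℕ, 2 * ((k : ℝ) ^ γ * c k) := by
        rw [← (hq.mul_left 2).tsum_add (hr.mul_left 2)]
        exact tsum_congr fun k => by ring
      rw [h1, tsum_mul_left, tsum_mul_left]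
      linarith
    have hsumN : Summable fun k : ℕ => ((k : ℝ) + 1) * (((k + 1 : ℕ) : ℝ) ^ γ * c (k + 1)
        + ((k - 1 : ℕ) : ℝ) ^ γ * c (k - 1) + 2 * ((k : ℝ) ^ γ * c k)) := by
      refine ((hn1.add hn2).add hn3).congr fun k => ?_; ring
    first
    | exact hsumN
    | {
      have hts : (∑' k : ℕ, ((k : ℝ) + 1) * (((k + 1 : ℕ) : ℝ) ^ γ * c (k + 1)
          + ((k - 1 : ℕ) : ℝ) ^ γ * c (k - 1) + 2 * ((k : ℝ) ^ γ * c k)))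
          = (∑' k : ℕ, ((k : ℝ) + 1) * (((k + 1 : ℕ) : ℝ) ^ γ * c (k + 1)))
            + (∑' k : ℕ, ((k : ℝ) + 1) * (((k - 1 : ℕ) : ℝ) ^ γ * c (k - 1)))
            + ∑' k : ℕ, ((k : ℝ) + 1) * (2 * ((k : ℝ) ^ γ * c k)) := by
        rw [← hn1.tsum_add hn2, ← (hn1.add hn2).tsum_add hn3]
        exact tsum_congr fun k => by ring
      rw [hts]; linarith }
  }

private lemma key (γ T : ℝ) (hγ : 0 < γ) (hT : 0 < T)
    (f : ℝ → ℕ → ℝ)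
    (hnn : ∀ t ∈ Set.Icc (0 : ℝ) T, ∀ k, 0 ≤ f t k)
    (hC1 : ∀ k, ContDiffOn ℝ 1 (fun t => f t k) (Set.Icc (0 : ℝ) T))
    (B : ℝ)
    (hmom : ∀ t ∈ Set.Icc (0 : ℝ) T,
      (Summable fun k : ℕ => (k : ℝ) ^ (γ + 1) * f t k) ∧
      (∑' k : ℕ, (k : ℝ) ^ (γ + 1) * f t k) ≤ B)
    (hODE : ∀ k : ℕ, ∀ t ∈ Set.Icc (0 : ℝ) T,
      HasDerivWithinAt (fun s => f s k)
        ((∑' l : ℕ, (l : ℝ) ^ γ * f t l) *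
          (((k + 1 : ℕ) : ℝ) ^ γ * f t (k + 1) + ((k - 1 : ℕ) : ℝ) ^ γ * f t (k - 1)
            - 2 * (k : ℝ) ^ γ * f t k))
        (Set.Icc (0 : ℝ) T) t)
    (w : ℕ → ℝ) (hw : ∀ k : ℕ, |w k| ≤ (k : ℝ) + 1)
    (htel : ∀ s ∈ Set.Icc (0 : ℝ) T,
      ∑' k : ℕ, w k * (((k + 1 : ℕ) : ℝ) ^ γ * f s (k + 1)
        + ((k - 1 : ℕ) : ℝ) ^ γ * f s (k - 1) - 2 * (k : ℝ) ^ γ * f s k) = 0)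
    (t : ℝ) (ht : t ∈ Set.Icc (0 : ℝ) T) :
    ∑' k : ℕ, w k * f t k = ∑' k : ℕ, w k * f 0 k := by
  obtain ⟨ht0, htT⟩ := ht
  have h0T : (0 : ℝ) ∈ Set.Icc (0 : ℝ) T := ⟨le_refl 0, hT.le⟩
  have htTm : t ∈ Set.Icc (0 : ℝ) T := ⟨ht0, htT⟩
  have hIccT : Set.Icc (0 : ℝ) t ⊆ Set.Icc (0 : ℝ) T := Set.Icc_subset_Icc le_rfl htT
  have hIocT : Set.Ioc (0 : ℝ) t ⊆ Set.Icc (0 : ℝ) T := fun s hs => ⟨hs.1.le, hs.2.trans htT⟩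
  have hBnn : 0 ≤ B := by
    refine le_trans (tsum_nonneg fun k => ?_) (hmom 0 h0T).2
    exact mul_nonneg (Real.rpow_nonneg (Nat.cast_nonneg k) _) (hnn 0 h0T k)
  have hUD : UniqueDiffOn ℝ (Set.Icc (0 : ℝ) T) := uniqueDiffOn_Icc hT
  set D : ℕ → ℝ → ℝ := fun k s => (∑' l : ℕ, (l : ℝ) ^ γ * f s l) *
      (((k + 1 : ℕ) : ℝ) ^ γ * f s (k + 1) + ((k - 1 : ℕ) : ℝ) ^ γ * f s (k - 1)
        - 2 * (k : ℝ) ^ γ * f s k) with hDdef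
  have hDderiv : ∀ k, ∀ s ∈ Set.Icc (0 : ℝ) T,
      HasDerivWithinAt (fun u => f u k) (D k s) (Set.Icc (0 : ℝ) T) s :=
    fun k s hs => hODE k s hs
  have hDcont : ∀ k, ContinuousOn (D k) (Set.Icc (0 : ℝ) T) := by
    intro k
    have hcd := (hC1 k).continuousOn_derivWithin hUD le_rfl
    exact hcd.congr fun s hs => ((hDderiv k s hs).derivWithin (hUD s hs)).symm
  have hFTC : ∀ k, (∫ s in (0 : ℝ)..t, D k s) = f t k - f 0 k := by
    intro k
    refine intervalIntegral.integral_eq_sub_of_hasDeriv_right_of_le ht0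
      (((hC1 k).continuousOn).mono hIccT) (fun x hx => ?_) ?_
    · have hnb : Set.Icc (0 : ℝ) T ∈ nhds x :=
        Icc_mem_nhds hx.1 (lt_of_lt_of_le hx.2 htT)
      exact ((hDderiv k x ⟨hx.1.le, (hx.2.trans_le htT).le⟩).hasDerivAt hnb).hasDerivWithinAt
    · have hcd := (hDcont k).mono hIccT
      rw [← Set.uIcc_of_le ht0] at hcd
      exact hcd.intervalIntegrable
  -- per-point majorant facts
  have hMaj := fun (s : ℝ) (hs : s ∈ Set.Icc (0 : ℝ) T) =>
    majorant γ B hγ (f s) (hnn s hs) (hmom s hs).1 (hmom s hs).2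
  -- norm bound
  have hnorm : ∀ s ∈ Set.Icc (0 : ℝ) T, ∀ k : ℕ, ‖w k * D k s‖ ≤
      B * (((k : ℝ) + 1) * (((k + 1 : ℕ) : ℝ) ^ γ * f s (k + 1)
        + ((k - 1 : ℕ) : ℝ) ^ γ * f s (k - 1) + 2 * ((k : ℝ) ^ γ * f s k))) := by
    intro s hs k
    obtain ⟨hr, hr_ts, -, -, -, -⟩ := hMaj s hs
    have hm_nonneg : 0 ≤ ∑' l : ℕ, (l : ℝ) ^ γ * f s l :=
      tsum_nonneg fun l => mul_nonneg (Real.rpow_nonneg (Nat.cast_nonneg l) _) (hnn s hs l)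
    have hA : (0 : ℝ) ≤ ((k + 1 : ℕ) : ℝ) ^ γ * f s (k + 1) :=
      mul_nonneg (Real.rpow_nonneg (Nat.cast_nonneg _) _) (hnn s hs _)
    have hB2 : (0 : ℝ) ≤ ((k - 1 : ℕ) : ℝ) ^ γ * f s (k - 1) :=
      mul_nonneg (Real.rpow_nonneg (Nat.cast_nonneg _) _) (hnn s hs _)
    have hC2 : (0 : ℝ) ≤ (k : ℝ) ^ γ * f s k :=
      mul_nonneg (Real.rpow_nonneg (Nat.cast_nonneg _) _) (hnn s hs _)
    have hE : |((k + 1 : ℕ) : ℝ) ^ γ * f s (k + 1) + ((k - 1 : ℕ) : ℝ) ^ γ * f s (k - 1)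
        - 2 * (k : ℝ) ^ γ * f s k| ≤ ((k + 1 : ℕ) : ℝ) ^ γ * f s (k + 1)
        + ((k - 1 : ℕ) : ℝ) ^ γ * f s (k - 1) + 2 * ((k : ℝ) ^ γ * f s k) := by
      rw [abs_le]
      constructor <;> nlinarith [abs_nonneg (f s k)]
    have h1 : ‖w k * D k s‖ = |w k| * ((∑' l : ℕ, (l : ℝ) ^ γ * f s l) *
        |((k + 1 : ℕ) : ℝ) ^ γ * f s (k + 1) + ((k - 1 : ℕ) : ℝ) ^ γ * f s (k - 1)
          - 2 * (k : ℝ) ^ γ * f s k|) := by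
      rw [hDdef]
      simp only [norm_mul, Real.norm_eq_abs, abs_of_nonneg hm_nonneg]
    rw [h1]
    have step1 : (∑' l : ℕ, (l : ℝ) ^ γ * f s l) *
        |((k + 1 : ℕ) : ℝ) ^ γ * f s (k + 1) + ((k - 1 : ℕ) : ℝ) ^ γ * f s (k - 1)
          - 2 * (k : ℝ) ^ γ * f s k| ≤ B * (((k + 1 : ℕ) : ℝ) ^ γ * f s (k + 1)
        + ((k - 1 : ℕ) : ℝ) ^ γ * f s (k - 1) + 2 * ((k : ℝ) ^ γ * f s k)) := by
      have hmB : (∑' l : ℕ, (l : ℝ) ^ γ * f s l) ≤ B := hr_ts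
      exact mul_le_mul hmB hE (abs_nonneg _) hBnn
    calc |w k| * ((∑' l : ℕ, (l : ℝ) ^ γ * f s l) * |_root_.id (((k + 1 : ℕ) : ℝ) ^ γ * f s (k + 1)
          + ((k - 1 : ℕ) : ℝ) ^ γ * f s (k - 1) - 2 * (k : ℝ) ^ γ * f s k)|)
        ≤ ((k : ℝ) + 1) * (B * (((k + 1 : ℕ) : ℝ) ^ γ * f s (k + 1)
          + ((k - 1 : ℕ) : ℝ) ^ γ * f s (k - 1) + 2 * ((k : ℝ) ^ γ * f s k))) := by
          refine mul_le_mul (hw k) ?_ (by positivity) (by positivity)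
          simpa using step1
      _ = B * (((k : ℝ) + 1) * (((k + 1 : ℕ) : ℝ) ^ γ * f s (k + 1)
          + ((k - 1 : ℕ) : ℝ) ^ γ * f s (k - 1) + 2 * ((k : ℝ) ^ γ * f s k))) := by ring
  -- summability and bound of the norm series
  have hsumnorm : ∀ s ∈ Set.Icc (0 : ℝ) T,
      (Summable fun k : ℕ => ‖w k * D k s‖) ∧
      (∑' k : ℕ, ‖w k * D k s‖) ≤ B * (8 * B) := by
    intro s hs
    obtain ⟨-, -, -, -, hN, hN_ts⟩ := hMaj s hs
    have hNsum : Summable fun k : ℕ => B * (((k : ℝ) + 1) * (((k + 1 : ℕ) : ℝ) ^ γ * f s (k + 1)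
        + ((k - 1 : ℕ) : ℝ) ^ γ * f s (k - 1) + 2 * ((k : ℝ) ^ γ * f s k))) := hN.mul_left B
    have hs1 : Summable fun k : ℕ => ‖w k * D k s‖ :=
      Summable.of_nonneg_of_le (fun k => norm_nonneg _) (hnorm s hs) hNsum
    refine ⟨hs1, ?_⟩
    calc (∑' k : ℕ, ‖w k * D k s‖)
        ≤ ∑' k : ℕ, B * (((k : ℝ) + 1) * (((k + 1 : ℕ) : ℝ) ^ γ * f s (k + 1)
          + ((k - 1 : ℕ) : ℝ) ^ γ * f s (k - 1) + 2 * ((k : ℝ) ^ γ * f s k))) :=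
          Summable.tsum_le_tsum (hnorm s hs) hs1 hNsum
      _ = B * ∑' k : ℕ, (((k : ℝ) + 1) * (((k + 1 : ℕ) : ℝ) ^ γ * f s (k + 1)
          + ((k - 1 : ℕ) : ℝ) ^ γ * f s (k - 1) + 2 * ((k : ℝ) ^ γ * f s k))) := tsum_mul_left
      _ ≤ B * (8 * B) := by
          exact mul_le_mul_of_nonneg_left hN_ts hBnn
  -- measurability
  have hmeas : ∀ k : ℕ, AEStronglyMeasurable (fun s => w k * D k s)
      (volume.restrict (Set.Ioc (0 : ℝ) t)) := by
    intro k
    exact (((hDcont k).mono hIocT).aestronglyMeasurable measurableSet_Ioc).const_mul (w k)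
  -- finiteness of the lintegral sum
  have hfin : (∑' k : ℕ, ∫⁻ s in Set.Ioc (0 : ℝ) t, ‖w k * D k s‖₊) ≠ ⊤ := by
    rw [← MeasureTheory.lintegral_tsum (f := fun k s => (‖w k * D k s‖₊ : ENNReal)) fun k => (hmeas k).enorm]
    have hb : (∫⁻ s in Set.Ioc (0 : ℝ) t, ∑' k : ℕ, (‖w k * D k s‖₊ : ENNReal))
        ≤ ∫⁻ _ in Set.Ioc (0 : ℝ) t, ENNReal.ofReal (B * (8 * B)) := by
      refine lintegral_mono_ae ?_
      filter_upwards [ae_restrict_mem measurableSet_Ioc] with s hs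
      obtain ⟨h1, h2⟩ := hsumnorm s (hIocT hs)
      calc (∑' k : ℕ, (‖w k * D k s‖₊ : ENNReal))
          = ENNReal.ofReal (∑' k : ℕ, ‖w k * D k s‖) := by
            rw [ENNReal.ofReal_tsum_of_nonneg (fun k => norm_nonneg _) h1]
            exact tsum_congr fun k => (ofReal_norm _).symm
        _ ≤ ENNReal.ofReal (B * (8 * B)) := ENNReal.ofReal_le_ofReal h2
    refine ne_top_of_le_ne_top ?_ hb
    rw [MeasureTheory.lintegral_const]
    exact ENNReal.mul_ne_top ENNReal.ofReal_ne_top (by simp [Real.volume_Ioc])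
  have hswap := MeasureTheory.integral_tsum hmeas hfin
  -- pointwise zero
  have hzero : ∀ s ∈ Set.Ioc (0 : ℝ) t, (∑' k : ℕ, w k * D k s) = 0 := by
    intro s hs
    have he : (fun k : ℕ => w k * D k s) = fun k : ℕ =>
        (∑' l : ℕ, (l : ℝ) ^ γ * f s l) *
        (w k * (((k + 1 : ℕ) : ℝ) ^ γ * f s (k + 1) + ((k - 1 : ℕ) : ℝ) ^ γ * f s (k - 1)
          - 2 * (k : ℝ) ^ γ * f s k)) := by
      funext k; rw [hDdef]; ring
    rw [he, tsum_mul_left, htel s (hIocT hs), mul_zero]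
  have hL : (∫ s in Set.Ioc (0 : ℝ) t, ∑' k : ℕ, w k * D k s) = 0 := by
    rw [MeasureTheory.setIntegral_congr_fun measurableSet_Ioc hzero]
    simp
  have hI : ∀ k : ℕ, (∫ s in Set.Ioc (0 : ℝ) t, w k * D k s) = w k * (f t k - f 0 k) := by
    intro k
    rw [MeasureTheory.integral_const_mul, ← intervalIntegral.integral_of_le ht0, hFTC k]
  have h0 : (∑' k : ℕ, w k * (f t k - f 0 k)) = 0 := by
    calc (∑' k : ℕ, w k * (f t k - f 0 k))
        = ∑' k : ℕ, ∫ s in Set.Ioc (0 : ℝ) t, w k * D k s := tsum_congr fun k => (hI k).symm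
      _ = ∫ s in Set.Ioc (0 : ℝ) t, ∑' k : ℕ, w k * D k s := hswap.symm
      _ = 0 := hL
  -- summability of the weighted moments
  have hsw : ∀ s ∈ Set.Icc (0 : ℝ) T, Summable fun k : ℕ => w k * f s k := by
    intro s hs
    have hk1 : Summable fun k : ℕ => (k : ℝ) * f s k := by
      refine summable_weight (hnn s hs) (hmom s hs).1 _ fun k hk => ?_
      rw [abs_of_nonneg (Nat.cast_nonneg k : (0:ℝ) ≤ (k:ℝ))]
      exact nat_le_rpow hγ hk
    have hk0 : Summable fun k : ℕ => f s k := by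
      have := summable_weight (hnn s hs) (hmom s hs).1 (fun _ => (1 : ℝ)) fun k hk => by
        rw [abs_one]; exact one_le_rpow_nat hγ hk
      exact this.congr fun k => one_mul _
    have h1 : Summable fun k : ℕ => ((k : ℝ) + 1) * f s k := by
      refine (hk1.add hk0).congr fun k => ?_; ring
    refine Summable.of_norm_bounded h1 fun k => ?_
    rw [norm_mul, Real.norm_eq_abs, Real.norm_eq_abs, abs_of_nonneg (hnn s hs k)]
    exact mul_le_mul_of_nonneg_right (hw k) (hnn s hs k)
  have hst := hsw t htTm
  have hs0 := hsw 0 h0T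
  have h0' : (∑' k : ℕ, w k * f t k) - (∑' k : ℕ, w k * f 0 k) = 0 := by
    rw [← hst.tsum_sub hs0]
    calc (∑' k : ℕ, (w k * f t k - w k * f 0 k))
        = ∑' k : ℕ, w k * (f t k - f 0 k) := tsum_congr fun k => (mul_sub _ _ _).symm
      _ = 0 := h0
  linarith

/-- conservation of mass and normalization for the product-kernel mean-field
equation (4.1): for the symmetric product kernel `c(k,l) = (kl)^γ` with `γ > 0`, any
continuously differentiable solution on `[0,T]` with uniformly bounded `(γ+1)`-th moment
conserves the zeroth and first moments.  Real powers (`rpow`) are used, with `0^γ = 0`,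
so the `(k−1)`-term (truncated subtraction) vanishes for `k = 0`, encoding `f_{−1} ≡ 0`. -/
theorem stmt17 (γ T : ℝ) (hγ : 0 < γ) (hT : 0 < T)
    (f : ℝ → ℕ → ℝ)
    (hnn : ∀ t ∈ Set.Icc (0 : ℝ) T, ∀ k, 0 ≤ f t k)
    (hC1 : ∀ k, ContDiffOn ℝ 1 (fun t => f t k) (Set.Icc (0 : ℝ) T))
    (hmom : ∃ B : ℝ, ∀ t ∈ Set.Icc (0 : ℝ) T,
      (Summable fun k : ℕ => (k : ℝ) ^ (γ + 1) * f t k) ∧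
      (∑' k : ℕ, (k : ℝ) ^ (γ + 1) * f t k) ≤ B)
    (hODE : ∀ k : ℕ, ∀ t ∈ Set.Icc (0 : ℝ) T,
      HasDerivWithinAt (fun s => f s k)
        ((∑' l : ℕ, (l : ℝ) ^ γ * f t l) *
          (((k + 1 : ℕ) : ℝ) ^ γ * f t (k + 1) + ((k - 1 : ℕ) : ℝ) ^ γ * f t (k - 1)
            - 2 * (k : ℝ) ^ γ * f t k))
        (Set.Icc (0 : ℝ) T) t) :
    ∀ t ∈ Set.Icc (0 : ℝ) T,
      (∑' k : ℕ, f t k) = (∑' k : ℕ, f 0 k) ∧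
      (∑' k : ℕ, (k : ℝ) * f t k) = (∑' k : ℕ, (k : ℝ) * f 0 k) := by
  obtain ⟨B, hB⟩ := hmom
  intro t ht
  have ha0 : ∀ s : ℝ, ((0 : ℕ) : ℝ) ^ γ * f s 0 = 0 := fun s => by
    simp [Real.zero_rpow hγ.ne']
  have hsum := fun (s : ℝ) (hs : s ∈ Set.Icc (0 : ℝ) T) =>
    majorant γ B hγ (f s) (hnn s hs) (hB s hs).1 (hB s hs).2
  constructor
  · have h1 := key γ T hγ hT f hnn hC1 B hB hODE (fun _ => 1)
      (fun k => by rw [abs_one]; have : (0:ℝ) ≤ (k:ℝ) := Nat.cast_nonneg k; linarith)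
      (fun s hs => by
        have ht0 := telescope0 (a := fun k : ℕ => (k : ℝ) ^ γ * f s k) (hsum s hs).1 (ha0 s)
        calc (∑' k : ℕ, (1 : ℝ) * (((k + 1 : ℕ) : ℝ) ^ γ * f s (k + 1)
              + ((k - 1 : ℕ) : ℝ) ^ γ * f s (k - 1) - 2 * (k : ℝ) ^ γ * f s k))
            = ∑' k : ℕ, (((k + 1 : ℕ) : ℝ) ^ γ * f s (k + 1)
              + ((k - 1 : ℕ) : ℝ) ^ γ * f s (k - 1) - 2 * ((k : ℝ) ^ γ * f s k)) :=
              tsum_congr fun k => by ring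
          _ = 0 := ht0) t ht
    calc (∑' k : ℕ, f t k) = ∑' k : ℕ, (1 : ℝ) * f t k := tsum_congr fun k => (one_mul _).symm
      _ = ∑' k : ℕ, (1 : ℝ) * f 0 k := h1
      _ = ∑' k : ℕ, f 0 k := tsum_congr fun k => one_mul _
  · exact key γ T hγ hT f hnn hC1 B hB hODE (fun k => (k : ℝ))
      (fun k => by rw [abs_of_nonneg (Nat.cast_nonneg k : (0:ℝ) ≤ (k:ℝ))]; linarith)
      (fun s hs => by
        have ht1 := telescope1 (a := fun k : ℕ => (k : ℝ) ^ γ * f s k) (hsum s hs).1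
          (hsum s hs).2.2.1 (ha0 s)
        calc (∑' k : ℕ, (k : ℝ) * (((k + 1 : ℕ) : ℝ) ^ γ * f s (k + 1)
              + ((k - 1 : ℕ) : ℝ) ^ γ * f s (k - 1) - 2 * (k : ℝ) ^ γ * f s k))
            = ∑' k : ℕ, (k : ℝ) * (((k + 1 : ℕ) : ℝ) ^ γ * f s (k + 1)
              + ((k - 1 : ℕ) : ℝ) ^ γ * f s (k - 1) - 2 * ((k : ℝ) ^ γ * f s k)) :=
              tsum_congr fun k => by ring
          _ = 0 := ht1) t ht
end

section
/- (Equivalence of the weak formulation (3.20) and the master equation (2.9).) Let c : ℕ × ℕ → ℝ with c(k,l) ≥ 0 and c(0,l) = 0 for all k,l, and let f : [0,∞) → (ℕ → ℝ) be such that every f_k(t) ≥ 0, every t ↦ f_k(t) is continuous, and for each k the function t ↦ μ_k(t) := ∑_{l≥1} c(k,l) f_l(t) is finite and continuous. Suppose that for every bounded h : ℕ → ℝ and every t ≥ 0, with all sums absolutely convergent and the integrand integrable, ∑_{k≥0} f_k(t) h(k) − ∑_{k≥0} f_k(0) h(k) = ∫_0^t ∑_{k≥1} μ_k(s) ( h(k+1)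 − 2h(k) + h(k−1) ) f_k(s) ds. Then for every k ≥ 0 the function t ↦ f_k(t) is differentiable and satisfies f_k'(t) = μ_{k+1}(t) f_{k+1}(t) + μ_{k−1}(t) f_{k−1}(t) − 2 μ_k(t) f_k(t), with the convention f_{−1}(t) ≡ 0 (and μ_0(t) = 0 since c(0,l) = 0). -/
open MeasureTheory

lemma ftcIci (g : ℝ → ℝ) (hg : ContinuousOn g (Set.Ici (0:ℝ))) {t : ℝ} (ht : 0 ≤ t) :
    HasDerivWithinAt (fun u => ∫ x in (0:ℝ)..u, g x) (g t) (Set.Ici (0:ℝ)) t := by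
  have hint : IntervalIntegrable g volume 0 t := by
    apply ContinuousOn.intervalIntegrable
    exact hg.mono (by rw [Set.uIcc_of_le ht]; exact Set.Icc_subset_Ici_self)
  rcases eq_or_lt_of_le ht with rfl | htpos
  · exact intervalIntegral.integral_hasDerivWithinAt_right (t := Set.Ioi (0:ℝ)) hint
      ⟨Set.Ioo 0 1, Ioo_mem_nhdsGT_of_mem (by constructor <;> norm_num),
        (hg.mono (by intro x hx; exact le_of_lt hx.1)).aestronglyMeasurable measurableSet_Ioo⟩
      ((hg 0 Set.self_mem_Ici).mono (by intro x hx; exact le_of_lt (Set.mem_Ioi.mp hx)))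
  · have hnhds : Set.Ici (0:ℝ) ∈ nhds t := Ici_mem_nhds htpos
    exact (intervalIntegral.integral_hasDerivAt_right hint
      ⟨Set.Ici 0, hnhds, hg.aestronglyMeasurable measurableSet_Ici⟩
      ((hg t (le_of_lt htpos)).continuousAt hnhds)).hasDerivWithinAt

/-- equivalence of the weak formulation (3.20) and the master equation (2.9):
if `f` satisfies the weak formulation against all bounded test functions `h : ℕ → ℝ`
(with all sums absolutely convergent and the integrand integrable), then each `f_k` is
differentiable and satisfies the master equation
`f_k' = μ_{k+1} f_{k+1} + μ_{k−1} f_{k−1} − 2 μ_k f_k`, where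
`μ_k(t) = ∑_{l≥1} c(k,l) f_l(t)` (written as a shifted `tsum`).  The convention
`f_{−1} ≡ 0` is automatic under truncated subtraction since `μ_0 = 0` (as `c(0,l) = 0`). -/
theorem stmt18 (c : ℕ → ℕ → ℝ)
    (hcnn : ∀ k l, 0 ≤ c k l)
    (hc0 : ∀ l, c 0 l = 0)
    (f : ℝ → ℕ → ℝ)
    (hnn : ∀ t, 0 ≤ t → ∀ k, 0 ≤ f t k)
    (hcont : ∀ k, ContinuousOn (fun t => f t k) (Set.Ici (0 : ℝ)))
    (hμsum : ∀ k : ℕ, ∀ t, 0 ≤ t → Summable fun l : ℕ => c k (l + 1) * f t (l + 1))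
    (hμcont : ∀ k : ℕ,
      ContinuousOn (fun t => ∑' l : ℕ, c k (l + 1) * f t (l + 1)) (Set.Ici (0 : ℝ)))
    (hweak : ∀ h : ℕ → ℝ, (∃ M : ℝ, ∀ k, |h k| ≤ M) → ∀ t : ℝ, 0 ≤ t →
      (∀ s ∈ Set.Icc (0 : ℝ) t, Summable fun k : ℕ =>
        (∑' l : ℕ, c (k + 1) (l + 1) * f s (l + 1)) *
          (h (k + 2) - 2 * h (k + 1) + h k) * f s (k + 1)) ∧
      IntegrableOn (fun s => ∑' k : ℕ,
        (∑' l : ℕ, c (k + 1) (l + 1) * f s (l + 1)) *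
          (h (k + 2) - 2 * h (k + 1) + h k) * f s (k + 1)) (Set.Icc (0 : ℝ) t) ∧
      (Summable fun k : ℕ => f t k * h k) ∧ (Summable fun k : ℕ => f 0 k * h k) ∧
      (∑' k : ℕ, f t k * h k) - (∑' k : ℕ, f 0 k * h k) =
        ∫ s in Set.Icc (0 : ℝ) t, ∑' k : ℕ,
          (∑' l : ℕ, c (k + 1) (l + 1) * f s (l + 1)) *
            (h (k + 2) - 2 * h (k + 1) + h k) * f s (k + 1)) :
    ∀ k : ℕ, ∀ t : ℝ, 0 ≤ t →
      HasDerivWithinAt (fun s => f s k)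
        ((∑' l : ℕ, c (k + 1) (l + 1) * f t (l + 1)) * f t (k + 1)
          + (∑' l : ℕ, c (k - 1) (l + 1) * f t (l + 1)) * f t (k - 1)
          - 2 * (∑' l : ℕ, c k (l + 1) * f t (l + 1)) * f t k)
        (Set.Ici (0 : ℝ)) t := by
  intro k t ht
  set h : ℕ → ℝ := fun n => if n = k then 1 else 0 with hh
  have hbd : ∃ M : ℝ, ∀ n, |h n| ≤ M := ⟨1, fun n => by
    simp only [hh]; split <;> simp⟩
  set G : ℝ → ℝ := fun s =>
    (∑' l : ℕ, c (k + 1) (l + 1) * f s (l + 1)) * f s (k + 1)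
      + (∑' l : ℕ, c (k - 1) (l + 1) * f s (l + 1)) * f s (k - 1)
      - 2 * (∑' l : ℕ, c k (l + 1) * f s (l + 1)) * f s k with hG
  -- the delta-test-function integrand equals G pointwise
  have key : ∀ s : ℝ,
      (∑' j : ℕ, (∑' l : ℕ, c (j + 1) (l + 1) * f s (l + 1)) *
        (h (j + 2) - 2 * h (j + 1) + h j) * f s (j + 1)) = G s := by
    intro s
    have hz0 : (∑' l : ℕ, c 0 (l + 1) * f s (l + 1)) = 0 := by simp [hc0]
    match k with
    | 0 =>
      have hzero : ∀ j : ℕ, j ∉ ({0} : Finset ℕ) →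
          (∑' l : ℕ, c (j + 1) (l + 1) * f s (l + 1)) *
            (h (j + 2) - 2 * h (j + 1) + h j) * f s (j + 1) = 0 := by
        intro j hj
        simp only [Finset.mem_singleton] at hj
        simp only [hh]
        rw [if_neg (by omega), if_neg (by omega), if_neg hj]
        ring
      rw [tsum_eq_sum hzero, Finset.sum_singleton]
      simp only [hG, hh]
      norm_num [hz0]
    | 1 =>
      have hzero : ∀ j : ℕ, j ∉ ({0, 1} : Finset ℕ) →
          (∑' l : ℕ, c (j + 1) (l + 1) * f s (l + 1)) *
            (h (j + 2) - 2 * h (j + 1) + h j) * f s (j + 1) = 0 := by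
        intro j hj
        simp only [Finset.mem_insert, Finset.mem_singleton, not_or] at hj
        simp only [hh]
        rw [if_neg (by omega), if_neg (by omega), if_neg (by omega)]
        ring
      rw [tsum_eq_sum hzero, Finset.sum_pair (by norm_num)]
      simp only [hG, hh]
      norm_num [hz0]
      ring
    | (m + 2) =>
      have hzero : ∀ j : ℕ, j ∉ ({m, m + 1, m + 2} : Finset ℕ) →
          (∑' l : ℕ, c (j + 1) (l + 1) * f s (l + 1)) *
            (h (j + 2) - 2 * h (j + 1) + h j) * f s (j + 1) = 0 := by
        intro j hj
        simp only [Finset.mem_insert, Finset.mem_singleton, not_or] at hj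
        simp only [hh]
        rw [if_neg (by omega), if_neg (by omega), if_neg (by omega)]
        ring
      rw [tsum_eq_sum hzero, Finset.sum_insert (by simp), Finset.sum_insert (by simp),
        Finset.sum_singleton]
      simp only [hG, hh, if_true]
      rw [if_neg (show ¬(m + 1 = m + 2) by omega), if_neg (show ¬(m = m + 2) by omega),
        if_neg (show ¬(m + 1 + 2 = m + 2) by omega),
        if_neg (show ¬(m + 2 + 2 = m + 2) by omega)]
      have h1 : m + 1 + 1 = m + 2 := rfl
      have h2 : m + 2 + 1 = m + 3 := rfl
      have h3 : m + 2 - 1 = m + 1 := rfl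
      rw [h1, h2, h3]
      ring
  -- the equality f u k = f 0 k + ∫_0^u G
  have heq : ∀ u : ℝ, 0 ≤ u → f u k = f 0 k + ∫ x in (0:ℝ)..u, G x := by
    intro u hu
    obtain ⟨-, -, -, -, hmain⟩ := hweak h hbd u hu
    have ht1 : ∀ v : ℝ, (∑' n : ℕ, f v n * h n) = f v k := by
      intro v
      rw [tsum_eq_single k (by intro n hn; simp [hh, if_neg hn])]
      simp [hh]
    rw [ht1, ht1] at hmain
    simp only [key] at hmain
    rw [intervalIntegral.integral_of_le hu, ← integral_Icc_eq_integral_Ioc]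
    linarith [hmain]
  -- continuity of G on Ici 0
  have hGcont : ContinuousOn G (Set.Ici (0:ℝ)) := by
    exact (((hμcont (k + 1)).mul (hcont (k + 1))).add
      ((hμcont (k - 1)).mul (hcont (k - 1)))).sub
      ((continuousOn_const.mul (hμcont k)).mul (hcont k))
  have hF := (ftcIci G hGcont ht).const_add (f 0 k)
  exact hF.congr (fun y hy => heq y hy) (heq t ht)
end

section
/- (Identity and bound for the tagged occupation drift, from the proof of Proposition 5.3.) Let L ≥ 2, let the jump rates c be symmetric (c(k,l) = c(l,k) for all k,l ∈ ℕ) with c(0,l) = 0 for all l, and satisfy the growth bound c(k,l) ≤ C(k^μ l^ν + k^ν l^μ) for all k,l with constants C > 0 and 0 ≤ μ, ν ≤ 2, μ + ν ≤ 3. Let η : Fin L → ℕ be a configuration and n ≥ 1 an integer, and let id : ℕ → ℝ denote k ↦ k. Then (L̂^L_η id)(n) = (L/(L−1)) (1/n) ∑_{k≥0} c(n,k) F_k(η) (k − n + 2) − (2/(n(L−1))) c(n,n), and |(L̂^L_η id)(n)| ≤ 2C ( n^{μ−1} ∑_{k≥1} k^{ν+1} F_k(η) + n^{ν−1} ∑_{k≥1}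 k^{μ+1} F_k(η) ) + 6C ( n^{μ} ∑_{k≥1} k^{ν} F_k(η) + n^{ν} ∑_{k≥1} k^{μ} F_k(η) ) + (4C/(L−1)) n^{μ+ν−1}. -/
set_option maxHeartbeats 1000000

lemma emp_nonneg {L : ℕ} (η : Fin L → ℕ) (k : ℕ) : 0 ≤ emp η k := by
  unfold emp; positivity

/-- identity and bound for the tagged occupation drift, Proposition 5.3:
applying the tagged generator to the identity function yields the displayed identity,
and the resulting drift is bounded in terms of empirical moments.  Real powers (`rpow`)
are used; sums over `k ≥ 1` are shifted `tsum`s. -/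
theorem stmt19 (L : ℕ) (hL : 2 ≤ L) (c : ℕ → ℕ → ℝ)
    (hcnn : ∀ k l, 0 ≤ c k l)
    (hsym : ∀ k l, c k l = c l k)
    (hc0 : ∀ l, c 0 l = 0)
    (C μ ν : ℝ) (hC : 0 < C)
    (hμ0 : 0 ≤ μ) (hμ2 : μ ≤ 2) (hν0 : 0 ≤ ν) (hν2 : ν ≤ 2) (hμν : μ + ν ≤ 3)
    (hgrow : ∀ k l : ℕ, c k l ≤ C * ((k : ℝ) ^ μ * (l : ℝ) ^ ν + (k : ℝ) ^ ν * (l : ℝ) ^ μ))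
    (η : Fin L → ℕ) (n : ℕ) (hn : 1 ≤ n) :
    hatgen c η (fun k => ((k : ℕ) : ℝ)) n =
      ((L : ℝ) / ((L : ℝ) - 1)) * (1 / (n : ℝ)) *
        (∑' k : ℕ, c n k * emp η k * ((k : ℝ) - (n : ℝ) + 2))
      - (2 / ((n : ℝ) * ((L : ℝ) - 1))) * c n n ∧
    |hatgen c η (fun k => ((k : ℕ) : ℝ)) n| ≤
      2 * C * ((n : ℝ) ^ (μ - 1) * ∑' k : ℕ, ((k + 1 : ℕ) : ℝ) ^ (ν + 1) * emp η (k + 1)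
          + (n : ℝ) ^ (ν - 1) * ∑' k : ℕ, ((k + 1 : ℕ) : ℝ) ^ (μ + 1) * emp η (k + 1))
      + 6 * C * ((n : ℝ) ^ μ * ∑' k : ℕ, ((k + 1 : ℕ) : ℝ) ^ ν * emp η (k + 1)
          + (n : ℝ) ^ ν * ∑' k : ℕ, ((k + 1 : ℕ) : ℝ) ^ μ * emp η (k + 1))
      + (4 * C / ((L : ℝ) - 1)) * (n : ℝ) ^ (μ + ν - 1) := by
  have hid : hatgen c η (fun k => ((k : ℕ) : ℝ)) n =
      ((L : ℝ) / ((L : ℝ) - 1)) * (1 / (n : ℝ)) *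
        (∑' k : ℕ, c n k * emp η k * ((k : ℝ) - (n : ℝ) + 2))
      - (2 / ((n : ℝ) * ((L : ℝ) - 1))) * c n n := by
    have hn0 : (0:ℝ) < n := by exact_mod_cast hn
    have hnne : (n:ℝ) ≠ 0 := hn0.ne'
    have hL1 : (1:ℝ) < (L:ℝ) := by exact_mod_cast lt_of_lt_of_le one_lt_two hL
    have hLne : (L:ℝ) - 1 ≠ 0 := by linarith
    set N := Finset.univ.sup η + 1 with hN
    have hzero : ∀ k, N ≤ k → emp η k = 0 := by
      intro k hk
      unfold emp
      rw [Finset.filter_eq_empty_iff.mpr, Finset.card_empty]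
      · simp
      · intro x _
        have := Finset.le_sup (f := η) (Finset.mem_univ x)
        omega
    simp only [hatgen]
    push_cast [Nat.cast_sub hn]
    rw [show ((n:ℝ)+1-(n:ℝ)) = 1 from by ring, show ((n:ℝ)-1-(n:ℝ)) = -1 from by ring]
    simp only [mul_one, mul_neg_one]
    have hs1 : (∑' k : ℕ, c (k+1) n * emp η (k+1))
        = ∑ k ∈ Finset.range N, c (k+1) n * emp η (k+1) :=
      tsum_eq_sum (by
        intro b hb
        rw [hzero (b+1) (by simp only [Finset.mem_range, not_lt] at hb; omega), mul_zero])
    have hs2 : (∑' k : ℕ, -(c n k * emp η k))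
        = ∑ k ∈ Finset.range (N+1), -(c n k * emp η k) :=
      tsum_eq_sum (by
        intro b hb
        rw [hzero b (by simp only [Finset.mem_range, not_lt] at hb; omega), mul_zero, neg_zero])
    have hs3 : (∑' k : ℕ, c n k * emp η k * ((k:ℝ) + 1 - (n:ℝ)))
        = ∑ k ∈ Finset.range (N+1), c n k * emp η k * ((k:ℝ) + 1 - (n:ℝ)) :=
      tsum_eq_sum (by
        intro b hb
        rw [hzero b (by simp only [Finset.mem_range, not_lt] at hb; omega), mul_zero, zero_mul])
    have hs4 : (∑' k : ℕ, c n k * emp η k * ((k:ℝ) - (n:ℝ) + 2))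
        = ∑ k ∈ Finset.range (N+1), c n k * emp η k * ((k:ℝ) - (n:ℝ) + 2) :=
      tsum_eq_sum (by
        intro b hb
        rw [hzero b (by simp only [Finset.mem_range, not_lt] at hb; omega), mul_zero, zero_mul])
    rw [hs1, hs2, hs3, hs4]
    have hshift : ∑ k ∈ Finset.range (N+1), c n k * emp η k
        = ∑ k ∈ Finset.range N, c (k+1) n * emp η (k+1) := by
      rw [Finset.sum_range_succ']
      rw [hsym n 0, hc0, zero_mul, add_zero]
      exact Finset.sum_congr rfl (fun k _ => by rw [hsym])
    have hA : ∑ k ∈ Finset.range (N+1), c n k * emp η k * ((k:ℝ) - (n:ℝ) + 2)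
        = (∑ k ∈ Finset.range (N+1), c n k * emp η k)
          + ∑ k ∈ Finset.range (N+1), c n k * emp η k * ((k:ℝ) + 1 - (n:ℝ)) := by
      rw [← Finset.sum_add_distrib]
      exact Finset.sum_congr rfl (fun k _ => by ring)
    rw [Finset.sum_neg_distrib, hA, ← hshift]
    set P := ∑ k ∈ Finset.range (N+1), c n k * emp η k
    set T := ∑ k ∈ Finset.range (N+1), c n k * emp η k * ((k:ℝ) + 1 - (n:ℝ))
    field_simp
    ring
  refine ⟨hid, ?_⟩
  have hn0 : (0:ℝ) < n := by exact_mod_cast hn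
  have hn1 : (1:ℝ) ≤ n := by exact_mod_cast hn
  have hnne : (n:ℝ) ≠ 0 := hn0.ne'
  have hL1 : (1:ℝ) < (L:ℝ) := by exact_mod_cast lt_of_lt_of_le one_lt_two hL
  have hLpos : (0:ℝ) < (L:ℝ) - 1 := by linarith
  have hL2 : (L:ℝ) / ((L:ℝ) - 1) ≤ 2 := by
    rw [div_le_iff₀ hLpos]
    have : (2:ℝ) ≤ L := by exact_mod_cast hL
    linarith
  set N := Finset.univ.sup η + 1 with hN
  have hzero : ∀ k, N ≤ k → emp η k = 0 := by
    intro k hk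
    unfold emp
    rw [Finset.filter_eq_empty_iff.mpr, Finset.card_empty]
    · simp
    · intro x _
      have := Finset.le_sup (f := η) (Finset.mem_univ x)
      omega
  have hs4 : (∑' k : ℕ, c n k * emp η k * ((k:ℝ) - (n:ℝ) + 2))
      = ∑ k ∈ Finset.range (N+1), c n k * emp η k * ((k:ℝ) - (n:ℝ) + 2) :=
    tsum_eq_sum (by
      intro b hb
      rw [hzero b (by simp only [Finset.mem_range, not_lt] at hb; omega), mul_zero, zero_mul])
  have hm : ∀ α : ℝ, (∑' k : ℕ, ((k + 1 : ℕ) : ℝ) ^ α * emp η (k + 1))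
      = ∑ k ∈ Finset.range N, ((k + 1 : ℕ) : ℝ) ^ α * emp η (k + 1) := fun α =>
    tsum_eq_sum (by
      intro b hb
      rw [hzero (b+1) (by simp only [Finset.mem_range, not_lt] at hb; omega), mul_zero])
  rw [hid, hs4, hm (ν+1), hm (μ+1), hm ν, hm μ]
  -- abbreviations
  set A := ∑ k ∈ Finset.range (N+1), c n k * emp η k * ((k:ℝ) - (n:ℝ) + 2) with hAdef
  -- bound |A|
  have habs : |A| ≤ ∑ k ∈ Finset.range (N+1), c n k * emp η k * ((k:ℝ) + (n:ℝ) + 2) := by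
    refine (Finset.abs_sum_le_sum_abs _ _).trans (Finset.sum_le_sum ?_)
    intro k _
    rw [abs_mul, abs_mul, abs_of_nonneg (hcnn n k), abs_of_nonneg (emp_nonneg η k)]
    have hk0 : (0:ℝ) ≤ k := Nat.cast_nonneg k
    have : |(k:ℝ) - (n:ℝ) + 2| ≤ (k:ℝ) + (n:ℝ) + 2 := by
      rw [abs_le]; constructor <;> [linarith; linarith]
    exact mul_le_mul_of_nonneg_left this (mul_nonneg (hcnn n k) (emp_nonneg η k))
  have hshift2 : ∑ k ∈ Finset.range (N+1), c n k * emp η k * ((k:ℝ) + (n:ℝ) + 2)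
      = ∑ k ∈ Finset.range N, c n (k+1) * emp η (k+1) * (((k+1:ℕ):ℝ) + (n:ℝ) + 2) := by
    rw [Finset.sum_range_succ']
    rw [hsym n 0, hc0, zero_mul, zero_mul, add_zero]
  -- per-term bound
  have hper : ∀ k ∈ Finset.range N,
      (2 / (n:ℝ)) * (c n (k+1) * emp η (k+1) * (((k+1:ℕ):ℝ) + (n:ℝ) + 2)) ≤
      2*C*((n:ℝ)^(μ-1) * (((k+1:ℕ):ℝ)^(ν+1) * emp η (k+1))
          + (n:ℝ)^(ν-1) * (((k+1:ℕ):ℝ)^(μ+1) * emp η (k+1)))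
      + 6*C*((n:ℝ)^μ * (((k+1:ℕ):ℝ)^ν * emp η (k+1))
          + (n:ℝ)^ν * (((k+1:ℕ):ℝ)^μ * emp η (k+1))) := by
    intro k _
    have hx0 : (0:ℝ) < ((k+1:ℕ):ℝ) := by positivity
    set x := ((k+1:ℕ):ℝ) with hxdef
    set e := emp η (k+1) with hedef
    have he : 0 ≤ e := emp_nonneg η (k+1)
    set a := (n:ℝ)^μ with hadef
    set b := (n:ℝ)^ν with hbdef
    set xν := x^ν with hxν
    set xμ := x^μ with hxμ
    have ha0 : 0 < a := Real.rpow_pos_of_pos hn0 μ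
    have hb0 : 0 < b := Real.rpow_pos_of_pos hn0 ν
    have hxν0 : 0 < xν := Real.rpow_pos_of_pos hx0 ν
    have hxμ0 : 0 < xμ := Real.rpow_pos_of_pos hx0 μ
    have hr1 : (n:ℝ)^(μ-1) = a / n := by rw [hadef, Real.rpow_sub hn0, Real.rpow_one]
    have hr2 : (n:ℝ)^(ν-1) = b / n := by rw [hbdef, Real.rpow_sub hn0, Real.rpow_one]
    have hr3 : x^(ν+1) = xν * x := by rw [hxν, Real.rpow_add hx0, Real.rpow_one]
    have hr4 : x^(μ+1) = xμ * x := by rw [hxμ, Real.rpow_add hx0, Real.rpow_one]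
    rw [hr1, hr2, hr3, hr4]
    have hcb : c n (k+1) ≤ C * (a * xν + b * xμ) := hgrow n (k+1)
    have hQ0 : 0 ≤ C * (a * xν + b * xμ) := by positivity
    have key : c n (k+1) * e * (x + (n:ℝ) + 2) ≤ C * (a * xν + b * xμ) * e * (x + (n:ℝ) + 2) := by
      have hx1 : (0:ℝ) ≤ x + (n:ℝ) + 2 := by positivity
      have := mul_le_mul_of_nonneg_right hcb he
      exact mul_le_mul_of_nonneg_right this hx1
    have step1 : (2 / (n:ℝ)) * (c n (k+1) * e * (x + (n:ℝ) + 2))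
        ≤ (2 / (n:ℝ)) * (C * (a * xν + b * xμ) * e * (x + (n:ℝ) + 2)) := by
      apply mul_le_mul_of_nonneg_left key (by positivity)
    refine step1.trans ?_
    have expand : (2 / (n:ℝ)) * (C * (a * xν + b * xμ) * e * (x + (n:ℝ) + 2))
        = 2*C*((a/(n:ℝ)) * ((xν * x) * e) + (b/(n:ℝ)) * ((xμ * x) * e))
          + ((2 / (n:ℝ)) * ((n:ℝ) + 2)) * (C * (a * xν + b * xμ) * e) := by
      field_simp
      ring
    rw [expand]
    have h6 : (2 / (n:ℝ)) * ((n:ℝ) + 2) ≤ 6 := by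
      rw [div_mul_eq_mul_div, div_le_iff₀ hn0]
      linarith
    have last : ((2 / (n:ℝ)) * ((n:ℝ) + 2)) * (C * (a * xν + b * xμ) * e)
        ≤ 6 * (C * (a * xν + b * xμ) * e) := by
      apply mul_le_mul_of_nonneg_right h6 (by positivity)
    have hre : 6*C*(a * (xν * e) + b * (xμ * e)) = 6 * (C * (a * xν + b * xμ) * e) := by ring
    rw [hre]
    linarith [last]
  -- assemble
  have hA2nn : (0:ℝ) ≤ ∑ k ∈ Finset.range N, c n (k+1) * emp η (k+1) * (((k+1:ℕ):ℝ) + (n:ℝ) + 2) := by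
    apply Finset.sum_nonneg
    intro k _
    have : (0:ℝ) ≤ ((k+1:ℕ):ℝ) + (n:ℝ) + 2 := by positivity
    exact mul_nonneg (mul_nonneg (hcnn n (k+1)) (emp_nonneg η (k+1))) this
  have hub1 : (L:ℝ)/((L:ℝ)-1) * (1/(n:ℝ)) * |A|
      ≤ 2*C*((n:ℝ)^(μ-1) * ∑ k ∈ Finset.range N, ((k+1:ℕ):ℝ)^(ν+1) * emp η (k+1)
          + (n:ℝ)^(ν-1) * ∑ k ∈ Finset.range N, ((k+1:ℕ):ℝ)^(μ+1) * emp η (k+1))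
        + 6*C*((n:ℝ)^μ * ∑ k ∈ Finset.range N, ((k+1:ℕ):ℝ)^ν * emp η (k+1)
          + (n:ℝ)^ν * ∑ k ∈ Finset.range N, ((k+1:ℕ):ℝ)^μ * emp η (k+1)) := by
    have t1 : (L:ℝ)/((L:ℝ)-1) * (1/(n:ℝ)) * |A|
        ≤ 2 * (1/(n:ℝ)) * (∑ k ∈ Finset.range N, c n (k+1) * emp η (k+1) * (((k+1:ℕ):ℝ) + (n:ℝ) + 2)) := by
      rw [← hshift2]
      have h1 : |A| ≤ ∑ k ∈ Finset.range (N+1), c n k * emp η k * ((k:ℝ) + (n:ℝ) + 2) := habs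
      have h2 : (0:ℝ) ≤ |A| := abs_nonneg _
      have h3 : (0:ℝ) ≤ 1/(n:ℝ) := by positivity
      have h4 : (0:ℝ) < (L:ℝ)/((L:ℝ)-1) := by positivity
      calc (L:ℝ)/((L:ℝ)-1) * (1/(n:ℝ)) * |A|
          ≤ 2 * (1/(n:ℝ)) * |A| := by
            apply mul_le_mul_of_nonneg_right _ h2
            exact mul_le_mul_of_nonneg_right hL2 h3
        _ ≤ 2 * (1/(n:ℝ)) * (∑ k ∈ Finset.range (N+1), c n k * emp η k * ((k:ℝ) + (n:ℝ) + 2)) := by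
            apply mul_le_mul_of_nonneg_left h1 (by positivity)
    refine t1.trans ?_
    have t2 : 2 * (1/(n:ℝ)) * (∑ k ∈ Finset.range N, c n (k+1) * emp η (k+1) * (((k+1:ℕ):ℝ) + (n:ℝ) + 2))
        = ∑ k ∈ Finset.range N, (2 / (n:ℝ)) * (c n (k+1) * emp η (k+1) * (((k+1:ℕ):ℝ) + (n:ℝ) + 2)) := by
      rw [Finset.mul_sum]
      exact Finset.sum_congr rfl (fun k _ => by ring)
    rw [t2]
    refine (Finset.sum_le_sum hper).trans_eq ?_
    simp only [Finset.sum_add_distrib, mul_add, Finset.mul_sum, ← Finset.sum_add_distrib]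
  have hub2 : 2/((n:ℝ)*((L:ℝ)-1)) * c n n ≤ 4*C/((L:ℝ)-1) * (n:ℝ)^(μ+ν-1) := by
    have hcnnb : c n n ≤ 2*C*(n:ℝ)^(μ+ν) := by
      calc c n n ≤ C * ((n:ℝ)^μ*(n:ℝ)^ν + (n:ℝ)^ν*(n:ℝ)^μ) := hgrow n n
        _ = 2*C*(n:ℝ)^(μ+ν) := by rw [Real.rpow_add hn0]; ring
    calc 2/((n:ℝ)*((L:ℝ)-1)) * c n n ≤ 2/((n:ℝ)*((L:ℝ)-1)) * (2*C*(n:ℝ)^(μ+ν)) := by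
          apply mul_le_mul_of_nonneg_left hcnnb (by positivity)
      _ = 4*C/((L:ℝ)-1) * (n:ℝ)^(μ+ν-1) := by
          rw [Real.rpow_sub hn0, Real.rpow_one]
          field_simp
          ring
  have htri : |(L:ℝ)/((L:ℝ)-1) * (1/(n:ℝ)) * A - 2/((n:ℝ)*((L:ℝ)-1)) * c n n|
      ≤ (L:ℝ)/((L:ℝ)-1) * (1/(n:ℝ)) * |A| + 2/((n:ℝ)*((L:ℝ)-1)) * c n n := by
    refine (abs_sub _ _).trans ?_
    rw [abs_mul, abs_mul, abs_of_nonneg (by positivity : (0:ℝ) ≤ (L:ℝ)/((L:ℝ)-1)),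
      abs_of_nonneg (by positivity : (0:ℝ) ≤ 1/(n:ℝ)), abs_mul,
      abs_of_nonneg (by positivity : (0:ℝ) ≤ 2/((n:ℝ)*((L:ℝ)-1))),
      abs_of_nonneg (hcnn n n)]
  linarith [htri, hub1, hub2]
end
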